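/- arXiv:1506.03464 — 3 statements merged into one kernel-verified Lean document; each statement's English description precedes it below -/
import Mathlib

section
/- Let k ≥ 2, σ ∈ {+,−}^k and n ≥ 1. If π ∈ A_n(Σ_σ), then ĥπ* admits a *-σ-segmentation, i.e. ĥπ* ∈ C^{σ,*}. -/
/-- Infinite words over the alphabet `{0,…,k-1}`; `s i` is the letter `s_{i+1}`. -/
abbrev Word (k : ℕ) := ℕ → Fin k

/-- The number of indices `i < j` (0-indexed) with `σ_{s_i} = −` (`false` encodes `−`). -/
def negCount {k : ℕ} (σ : Fin k → Bool) (s : Word k) (j : ℕ) : ℕ :=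
  ((Finset.range j).filter (fun i => σ (s i) = false)).card

/-- The strict order `s ≺_σ t` on infinite words. -/
def sLt {k : ℕ} (σ : Fin k → Bool) (s t : Word k) : Prop :=
  ∃ j : ℕ, (∀ i < j, s i = t i) ∧ s j ≠ t j ∧
    ((Even (negCount σ s j) ∧ s j < t j) ∨ (¬ Even (negCount σ s j) ∧ t j < s j))

/-- `shiftW s i` is the word `s_{[i+1,∞)}`, i.e. the `i`-th iterate of the shift. -/
def shiftW {k : ℕ} (s : Word k) (i : ℕ) : Word k := fun m => s (m + i)

/-- `Pat(s, Σ_σ, n) = π`: the first `n` shifts of `s` are ordered according to `π`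
(0-indexed one-line notation). -/
def PatIs {k n : ℕ} (σ : Fin k → Bool) (s : Word k) (π : Equiv.Perm (Fin n)) : Prop :=
  ∀ i j : Fin n, π i < π j ↔ sLt σ (shiftW s i) (shiftW s j)

/-- The allowed patterns of length `n` of the signed shift `Σ_σ`. -/
def Allowed {k : ℕ} (σ : Fin k → Bool) (n : ℕ) : Set (Equiv.Perm (Fin n)) :=
  {π | ∃ s : Word k, PatIs σ s π}

/-- The starred cycle `ĥπ*` of `π`, as a partial map on 0-indexed positions:
position `π_i` carries value `π_{i+1}`, and position `π_n` carries `*` (i.e. `none`). -/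
def hatStar {n : ℕ} (π : Equiv.Perm (Fin n)) (p : Fin n) : Option (Fin n) :=
  if h : (π.symm p : ℕ) = n - 1 then none
  else some (π ⟨(π.symm p : ℕ) + 1, by have := (π.symm p).isLt; omega⟩)

/-- `e : ℕ → ℕ` (used on `{0,…,k}`) is a `*`-`σ`-segmentation of `ĥπ*`. -/
def IsStarSeg {k n : ℕ} (σ : Fin k → Bool) (π : Equiv.Perm (Fin n)) (e : ℕ → ℕ) : Prop :=
  e 0 = 0 ∧ e k = n ∧ Monotone e ∧
  -- (a) the non-`*` entries in the `t`-th block are increasing (σ_t = +) or decreasing (σ_t = −)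
  (∀ t : Fin k, ∀ p q : Fin n, e t ≤ (p : ℕ) → (q : ℕ) < e ((t : ℕ) + 1) → (p : ℕ) < (q : ℕ) →
    ∀ v w : Fin n, hatStar π p = some v → hatStar π q = some w →
      (if σ t = true then v < w else w < v)) ∧
  -- (b)
  (∀ (hk : 0 < k) (h0 : 0 < n) (h1 : 1 < n), σ ⟨0, hk⟩ = true →
     hatStar π ⟨0, h0⟩ = none → hatStar π ⟨1, h1⟩ = some ⟨0, h0⟩ → e 1 ≤ 1) ∧
  -- (c)
  (∀ (hk : k - 1 < k) (h0 : n - 2 < n) (h1 : n - 1 < n), σ ⟨k - 1, hk⟩ = true →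
     hatStar π ⟨n - 2, h0⟩ = some ⟨n - 1, h1⟩ → hatStar π ⟨n - 1, h1⟩ = none →
     n - 1 ≤ e (k - 1)) ∧
  -- (d)
  (∀ (hk0 : 0 < k) (hk1 : k - 1 < k) (h0 : 0 < n) (h1 : n - 2 < n) (h2 : n - 1 < n),
     σ ⟨0, hk0⟩ = false → σ ⟨k - 1, hk1⟩ = false →
     hatStar π ⟨0, h0⟩ = some ⟨n - 1, h2⟩ →
     hatStar π ⟨n - 2, h1⟩ = some ⟨0, h0⟩ → hatStar π ⟨n - 1, h2⟩ = none →
     e 1 = 0 ∨ n - 1 ≤ e (k - 1)) ∧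
  -- (e)
  (∀ (hk0 : 0 < k) (hk1 : k - 1 < k) (h0 : 0 < n) (h1 : 1 < n) (h2 : n - 1 < n),
     σ ⟨0, hk0⟩ = false → σ ⟨k - 1, hk1⟩ = false →
     hatStar π ⟨n - 1, h2⟩ = some ⟨0, h0⟩ →
     hatStar π ⟨0, h0⟩ = none → hatStar π ⟨1, h1⟩ = some ⟨n - 1, h2⟩ →
     e (k - 1) = n ∨ e 1 ≤ 1)

/-- `ĥπ* ∈ C^{σ,*}`: some `*`-`σ`-segmentation exists. -/
def InCstar {k n : ℕ} (σ : Fin k → Bool) (π : Equiv.Perm (Fin n)) : Prop :=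
  ∃ e : ℕ → ℕ, IsStarSeg σ π e

/-- The bad configuration forbidden by condition `(†)`: an integer `b ≥ 1` with `n − 2b ≥ 1`
such that `π_n` lies strictly between `π_{n−2b}` and `π_{n−b}`, and for all `1 ≤ i ≤ b` and
`0 ≤ t ≤ k−1`, `e_t < π_{n−b−i} ≤ e_{t+1}` iff `e_t < π_{n−i} ≤ e_{t+1}`.
(Values of `π` are 0-indexed, so `e_t < v ≤ e_{t+1}` becomes `e t ≤ v ∧ v < e (t+1)`.) -/
def DaggerBad (k : ℕ) {n : ℕ} (π : Equiv.Perm (Fin n)) (e : ℕ → ℕ) (b : ℕ) : Prop :=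
  ∃ (_ : 1 ≤ b) (hbn : 2 * b < n),
    (((π ⟨n - 1 - 2 * b, by omega⟩ : ℕ) < (π ⟨n - 1, by omega⟩ : ℕ) ∧
      (π ⟨n - 1, by omega⟩ : ℕ) < (π ⟨n - 1 - b, by omega⟩ : ℕ)) ∨
     ((π ⟨n - 1 - b, by omega⟩ : ℕ) < (π ⟨n - 1, by omega⟩ : ℕ) ∧
      (π ⟨n - 1, by omega⟩ : ℕ) < (π ⟨n - 1 - 2 * b, by omega⟩ : ℕ))) ∧
    (∀ i, 1 ≤ i → i ≤ b → ∀ t, t < k →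
      ((e t ≤ (π ⟨n - 1 - b - i, by omega⟩ : ℕ) ∧ (π ⟨n - 1 - b - i, by omega⟩ : ℕ) < e (t + 1)) ↔
       (e t ≤ (π ⟨n - 1 - i, by omega⟩ : ℕ) ∧ (π ⟨n - 1 - i, by omega⟩ : ℕ) < e (t + 1))))

/-- Condition `(†)`. -/
def Dagger {k n : ℕ} (σ : Fin k → Bool) (π : Equiv.Perm (Fin n)) : Prop :=
  ∃ e : ℕ → ℕ, IsStarSeg σ π e ∧ ∀ b : ℕ, ¬ DaggerBad k π e b

/-- The letter of the `π`-monotone word assigned to the (0-indexed) value `v`: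
the unique `t` with `e t ≤ v < e (t+1)` when `e` is a segmentation. -/
noncomputable def segLetter {k : ℕ} (hk : 0 < k) (e : ℕ → ℕ) (v : ℕ) : Fin k :=
  ⟨min (k - 1) (sInf {t : ℕ | v < e (t + 1)}),
   by have := Nat.min_le_left (k - 1) (sInf {t : ℕ | v < e (t + 1)}); omega⟩

/-- The `π`-monotone word `s_1 ⋯ s_n` associated to a segmentation `e`. -/
noncomputable def monoWord {k n : ℕ} (hk : 0 < k) (e : ℕ → ℕ) (π : Equiv.Perm (Fin n)) : List (Fin k) :=
  (List.finRange n).map (fun i => segLetter hk e (π i))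

/-- Prepend a finite word to an infinite word. -/
def appendW {k : ℕ} (l : List (Fin k)) (s : Word k) : Word k :=
  fun i => if h : i < l.length then l.get ⟨i, h⟩ else s (i - l.length)

/-- `n(q)`: number of negative letters of a finite word `q`. -/
def negCountL {k : ℕ} (σ : Fin k → Bool) (q : List (Fin k)) : ℕ :=
  (q.filter (fun c => σ c = false)).length

/-- The least word `w_σ` of `(W_k, ≺_σ)`. -/
def wMin {k : ℕ} (hk : 0 < k) (σ : Fin k → Bool) : Word k :=
  if σ ⟨0, hk⟩ = true then fun _ => ⟨0, hk⟩
  else if σ ⟨k - 1, by omega⟩ = true then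
    fun i => if i = 0 then ⟨0, hk⟩ else ⟨k - 1, by omega⟩
  else fun i => if i % 2 = 0 then ⟨0, hk⟩ else ⟨k - 1, by omega⟩

/-- The greatest word `W_σ` of `(W_k, ≺_σ)`. -/
def wMax {k : ℕ} (hk : 0 < k) (σ : Fin k → Bool) : Word k :=
  if σ ⟨k - 1, by omega⟩ = true then fun _ => ⟨k - 1, by omega⟩
  else if σ ⟨0, hk⟩ = true then
    fun i => if i = 0 then ⟨k - 1, by omega⟩ else ⟨0, hk⟩
  else fun i => if i % 2 = 0 then ⟨k - 1, by omega⟩ else ⟨0, hk⟩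

/-- A finite word is primitive if it is not a proper power of a shorter word. -/
def PrimitiveW {k : ℕ} (q : List (Fin k)) : Prop :=
  ¬ ∃ (r : List (Fin k)) (m : ℕ), r.length < q.length ∧ 1 < m ∧
      q = (List.replicate m r).flatten

/-- The word `s^{(1)}` (with `useMin = true`) resp. `s^{(2)}` (with `useMin = false`)
built from the `π`-monotone word of a segmentation `e` and a 0-indexed position `x0`:
`u p^{n−1}` followed by `w_σ`/`W_σ` according to the parities of `n` and `n(p)`. -/
noncomputable def buildWord {k n : ℕ} (hk : 0 < k) (σ : Fin k → Bool) (e : ℕ → ℕ)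
    (π : Equiv.Perm (Fin n)) (x0 : ℕ) (useMin : Bool) : Word k :=
  let w := monoWord hk e π
  let p := (w.take (n - 1)).drop x0
  let tail :=
    if n % 2 = 0 ∨ negCountL σ p % 2 = 0 then
      (if useMin then wMin hk σ else wMax hk σ)
    else
      (if useMin then wMax hk σ else wMin hk σ)
  appendW (w.take x0 ++ (List.replicate (n - 1) p).flatten) tail

/-- `ψ_k(t)`: the number of primitive words of length `t` over a `k`-letter alphabet. -/
noncomputable def psiW (k t : ℕ) : ℕ :=
  Set.ncard {q : List (Fin k) | q.length = t ∧ PrimitiveW q}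

/-- `a(n,k) = Σ_{t=1}^{n−1} ψ_k(t)·k^{n−t−1}`. -/
noncomputable def aNum (n k : ℕ) : ℕ :=
  ∑ t ∈ Finset.Icc 1 (n - 1), psiW k t * k ^ (n - t - 1)

/-- `I_{n,k} = a(n,k) + (k−2)k^{n−2}`, the number of allowed intervals of the `k`-shift. -/
noncomputable def INum (n k : ℕ) : ℕ := aNum n k + (k - 2) * k ^ (n - 2)

/-- The all-`+` signature, giving the `k`-shift. -/
def allPlus (k : ℕ) : Fin k → Bool := fun _ => true

/-- `b(n,2) = |A_n(Σ_2)|` and `b(n,i) = |A_n(Σ_i) \ A_n(Σ_{i−1})|` for `i ≥ 3`. -/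
noncomputable def bNum (n i : ℕ) : ℕ :=
  if i ≤ 2 then (Allowed (allPlus 2) n).ncard
  else ((Allowed (allPlus i) n) \ (Allowed (allPlus (i - 1)) n)).ncard

section Lems
variable {k : ℕ} {σ : Fin k → Bool}

lemma shiftW_zero (s : Word k) : shiftW s 0 = s := by
  funext m; simp [shiftW]

lemma shiftW_shiftW (s : Word k) (a b : ℕ) : shiftW (shiftW s a) b = shiftW s (b + a) := by
  funext m; simp [shiftW, Nat.add_assoc]

lemma shiftW_apply (s : Word k) (a m : ℕ) : shiftW s a m = s (m + a) := rfl

lemma sLt_irrefl (s : Word k) : ¬ sLt σ s s := by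
  rintro ⟨j, _, hne, _⟩; exact hne rfl

lemma negCount_congr {s t : Word k} (m : ℕ) (h : ∀ i < m, s i = t i) :
    negCount σ s m = negCount σ t m := by
  unfold negCount
  congr 1
  apply Finset.filter_congr
  intro i hi
  rw [h i (Finset.mem_range.mp hi)]

lemma sLt_total {s t : Word k} (h : s ≠ t) : sLt σ s t ∨ sLt σ t s := by
  have hex : ∃ j, s j ≠ t j := Function.ne_iff.mp h
  classical
  set j := Nat.find hex with hj
  have hne : s j ≠ t j := Nat.find_spec hex
  have hpre : ∀ i < j, s i = t i := fun i hi => by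
    by_contra hc; exact Nat.find_min hex hi hc
  have hcnt : negCount σ s j = negCount σ t j := negCount_congr j hpre
  rcases lt_or_gt_of_ne hne with hlt | hgt
  · by_cases he : Even (negCount σ s j)
    · exact Or.inl ⟨j, hpre, hne, Or.inl ⟨he, hlt⟩⟩
    · refine Or.inr ⟨j, fun i hi => (hpre i hi).symm, hne.symm, Or.inr ⟨?_, hlt⟩⟩
      rwa [← hcnt]
  · by_cases he : Even (negCount σ s j)
    · refine Or.inr ⟨j, fun i hi => (hpre i hi).symm, hne.symm, Or.inl ⟨?_, hgt⟩⟩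
      rwa [← hcnt]
    · exact Or.inl ⟨j, hpre, hne, Or.inr ⟨he, hgt⟩⟩

lemma sLt_firstLe {s t : Word k} (h : sLt σ s t) : s 0 ≤ t 0 := by
  obtain ⟨j, hpre, hne, hdir⟩ := h
  rcases Nat.eq_zero_or_pos j with rfl | hj
  · have h0 : negCount σ s 0 = 0 := by simp [negCount]
    rcases hdir with ⟨_, h⟩ | ⟨he, _⟩
    · exact le_of_lt h
    · exact absurd (h0 ▸ Even.zero) he
  · exact le_of_eq (hpre 0 hj)

lemma negCount_succ (s : Word k) (m : ℕ) :
    negCount σ s (m + 1) = negCount σ s m + (if σ (s m) = false then 1 else 0) := by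
  unfold negCount
  rw [Finset.range_add_one, Finset.filter_insert]
  by_cases h : σ (s m) = false <;> simp [h, Finset.card_insert_of_notMem]

lemma negCount_shift (s : Word k) (m : ℕ) :
    negCount σ s (m + 1) = negCount σ (shiftW s 1) m + (if σ (s 0) = false then 1 else 0) := by
  induction m with
  | zero =>
      have h1 : negCount σ s 1 = negCount σ s 0 + (if σ (s 0) = false then 1 else 0) :=
        negCount_succ s 0
      have h0 : negCount σ s 0 = 0 := by simp [negCount]
      have h0' : negCount σ (shiftW s 1) 0 = 0 := by simp [negCount]
      rw [h1, h0, h0']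
  | succ m ih =>
      rw [negCount_succ, ih, negCount_succ]
      have : (shiftW s 1) m = s (m + 1) := rfl
      rw [this]
      ring

lemma sLt_shift_pos {s t : Word k} (h0 : s 0 = t 0) (hσ : σ (s 0) = true)
    (h : sLt σ s t) : sLt σ (shiftW s 1) (shiftW t 1) := by
  obtain ⟨j, hpre, hne, hdir⟩ := h
  rcases Nat.eq_zero_or_pos j with rfl | hj
  · exact absurd h0 hne
  obtain ⟨j', rfl⟩ := Nat.exists_eq_succ_of_ne_zero (by omega : j ≠ 0)
  refine ⟨j', fun i hi => ?_, hne, ?_⟩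
  · exact hpre (i + 1) (by omega)
  · have hcnt : negCount σ s (j' + 1) = negCount σ (shiftW s 1) j' := by
      rw [negCount_shift]; simp [hσ]
    rw [← hcnt]
    exact hdir

lemma sLt_shift_neg {s t : Word k} (h0 : s 0 = t 0) (hσ : σ (s 0) = false)
    (h : sLt σ s t) : sLt σ (shiftW t 1) (shiftW s 1) := by
  obtain ⟨j, hpre, hne, hdir⟩ := h
  rcases Nat.eq_zero_or_pos j with rfl | hj
  · exact absurd h0 hne
  obtain ⟨j', rfl⟩ := Nat.exists_eq_succ_of_ne_zero (by omega : j ≠ 0)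
  have hcnt : negCount σ s (j' + 1) = negCount σ (shiftW s 1) j' + 1 := by
    rw [negCount_shift]; simp [hσ]
  have hcnt2 : negCount σ (shiftW t 1) j' = negCount σ (shiftW s 1) j' := by
    apply negCount_congr
    intro i hi
    exact (hpre (i + 1) (by omega)).symm
  refine ⟨j', fun i hi => (hpre (i + 1) (by omega)).symm, fun hc => hne hc.symm, ?_⟩
  rcases hdir with ⟨he, hlt⟩ | ⟨he, hlt⟩
  · right
    constructor
    · rw [hcnt2]; rw [hcnt] at he; simp [Nat.even_add_one] at he ⊢; exact he
    · exact hlt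
  · left
    constructor
    · rw [hcnt2]; rw [hcnt] at he; simp [Nat.even_add_one] at he; exact he
    · exact hlt

end Lems

section Lems2
variable {k : ℕ} {σ : Fin k → Bool}

lemma plusMin (hk : 0 < k) (hσ : σ ⟨0, hk⟩ = true) {w : Word k}
    (h0 : w 0 = ⟨0, hk⟩) (h : sLt σ (shiftW w 1) w) : False := by
  have key : ∀ i, w i = ⟨0, hk⟩ ∧ sLt σ (shiftW w (i + 1)) (shiftW w i) := by
    intro i
    induction i with
    | zero => exact ⟨h0, by rwa [shiftW_zero]⟩
    | succ i ih =>
        obtain ⟨hwi, hlt⟩ := ih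
        have hfl : shiftW w (i + 1) 0 = w (i + 1) := by simp [shiftW_apply]
        have hfl2 : shiftW w i 0 = w i := by simp [shiftW_apply]
        have hle : w (i + 1) ≤ w i := by
          have := sLt_firstLe hlt
          rwa [hfl, hfl2] at this
        have hwi1 : w (i + 1) = ⟨0, hk⟩ := by
          rw [hwi] at hle
          exact Fin.le_antisymm hle (by rw [Fin.le_def]; simp)
        have heq : shiftW w (i + 1) 0 = shiftW w i 0 := by rw [hfl, hfl2, hwi1, hwi]
        have hσ' : σ (shiftW w (i + 1) 0) = true := by rw [hfl, hwi1]; exact hσ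
        have := sLt_shift_pos heq hσ' hlt
        rw [shiftW_shiftW, shiftW_shiftW] at this
        exact ⟨hwi1, by convert this using 2 <;> omega⟩
  have hconst : shiftW w 1 = w := by
    funext m
    rw [shiftW_apply, (key (m + 1)).1, (key m).1]
  rw [hconst] at h
  exact sLt_irrefl w h

lemma plusMax (hk : 0 < k) (hσ : σ ⟨k - 1, by omega⟩ = true) {w : Word k}
    (h0 : w 0 = ⟨k - 1, by omega⟩) (h : sLt σ w (shiftW w 1)) : False := by
  have key : ∀ i, w i = ⟨k - 1, by omega⟩ ∧ sLt σ (shiftW w i) (shiftW w (i + 1)) := by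
    intro i
    induction i with
    | zero => exact ⟨h0, by rwa [shiftW_zero]⟩
    | succ i ih =>
        obtain ⟨hwi, hlt⟩ := ih
        have hfl : shiftW w (i + 1) 0 = w (i + 1) := by simp [shiftW_apply]
        have hfl2 : shiftW w i 0 = w i := by simp [shiftW_apply]
        have hle : w i ≤ w (i + 1) := by
          have := sLt_firstLe hlt
          rwa [hfl, hfl2] at this
        have hwi1 : w (i + 1) = ⟨k - 1, by omega⟩ := by
          rw [hwi] at hle
          have h2 := (w (i + 1)).isLt
          exact Fin.le_antisymm (by rw [Fin.le_def]; simp; omega) hle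
        have heq : shiftW w i 0 = shiftW w (i + 1) 0 := by rw [hfl, hfl2, hwi1, hwi]
        have hσ' : σ (shiftW w i 0) = true := by rw [hfl2, hwi]; exact hσ
        have := sLt_shift_pos heq hσ' hlt
        rw [shiftW_shiftW, shiftW_shiftW] at this
        exact ⟨hwi1, by convert this using 2 <;> omega⟩
  have hconst : shiftW w 1 = w := by
    funext m
    rw [shiftW_apply, (key (m + 1)).1, (key m).1]
  rw [hconst] at h
  exact sLt_irrefl w h

lemma negAlt (hk : 0 < k) (hσ0 : σ ⟨0, hk⟩ = false) (hσ1 : σ ⟨k - 1, by omega⟩ = false)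
    {a : Word k} (h0 : a 0 = ⟨0, hk⟩) (h1 : a 1 = ⟨k - 1, by omega⟩)
    (h : sLt σ (shiftW a 2) a) : False := by
  have key : ∀ m, a (2 * m) = ⟨0, hk⟩ ∧ a (2 * m + 1) = ⟨k - 1, by omega⟩ ∧
      sLt σ (shiftW a (2 * m + 2)) (shiftW a (2 * m)) := by
    intro m
    induction m with
    | zero => exact ⟨h0, h1, by simpa [shiftW_zero] using h⟩
    | succ m ih =>
        obtain ⟨ha0, ha1, hlt⟩ := ih
        have hle : a (2 * m + 2) ≤ a (2 * m) := by
          have := sLt_firstLe hlt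
          simpa [shiftW_apply] using this
        have hb0 : a (2 * m + 2) = ⟨0, hk⟩ := by
          rw [ha0] at hle
          exact Fin.le_antisymm hle (by rw [Fin.le_def]; simp)
        have heq : shiftW a (2 * m + 2) 0 = shiftW a (2 * m) 0 := by
          simp [shiftW_apply, hb0, ha0]
        have hσ' : σ (shiftW a (2 * m + 2) 0) = false := by
          simp [shiftW_apply, hb0]; exact hσ0
        have h2 := sLt_shift_neg heq hσ' hlt
        rw [shiftW_shiftW, shiftW_shiftW] at h2
        have h2' : sLt σ (shiftW a (2 * m + 1)) (shiftW a (2 * m + 3)) := by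
          convert h2 using 2 <;> omega
        have hle2 : a (2 * m + 1) ≤ a (2 * m + 3) := by
          have := sLt_firstLe h2'
          simpa [shiftW_apply] using this
        have hb1 : a (2 * m + 3) = ⟨k - 1, by omega⟩ := by
          rw [ha1] at hle2
          have := (a (2 * m + 3)).isLt
          exact Fin.le_antisymm (by rw [Fin.le_def]; simp; omega) hle2
        have heq2 : shiftW a (2 * m + 1) 0 = shiftW a (2 * m + 3) 0 := by
          simp [shiftW_apply, ha1, hb1]
        have hσ'' : σ (shiftW a (2 * m + 1) 0) = false := by
          simp [shiftW_apply, ha1]; exact hσ1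
        have h3 := sLt_shift_neg heq2 hσ'' h2'
        rw [shiftW_shiftW, shiftW_shiftW] at h3
        refine ⟨by rw [show 2 * (m + 1) = 2 * m + 2 by omega]; exact hb0,
          by rw [show 2 * (m + 1) + 1 = 2 * m + 3 by omega]; exact hb1, ?_⟩
        convert h3 using 2 <;> omega
  have hper : shiftW a 2 = a := by
    funext j
    rcases Nat.even_or_odd j with ⟨m, hm⟩ | ⟨m, hm⟩
    · rw [shiftW_apply]
      have e1 : j + 2 = 2 * (m + 1) := by omega
      have e2 : j = 2 * m := by omega
      rw [e1, e2, (key (m + 1)).1, (key m).1]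
    · rw [shiftW_apply]
      have e1 : j + 2 = 2 * (m + 1) + 1 := by omega
      have e2 : j = 2 * m + 1 := by omega
      rw [e1, e2, (key (m + 1)).2.1, (key m).2.1]
  rw [hper] at h
  exact sLt_irrefl a h

lemma negAlt' (hk : 0 < k) (hσ0 : σ ⟨0, hk⟩ = false) (hσ1 : σ ⟨k - 1, by omega⟩ = false)
    {a : Word k} (h0 : a 0 = ⟨k - 1, by omega⟩) (h1 : a 1 = ⟨0, hk⟩)
    (h : sLt σ a (shiftW a 2)) : False := by
  have key : ∀ m, a (2 * m) = ⟨k - 1, by omega⟩ ∧ a (2 * m + 1) = ⟨0, hk⟩ ∧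
      sLt σ (shiftW a (2 * m)) (shiftW a (2 * m + 2)) := by
    intro m
    induction m with
    | zero => exact ⟨h0, h1, by simpa [shiftW_zero] using h⟩
    | succ m ih =>
        obtain ⟨ha0, ha1, hlt⟩ := ih
        have hle : a (2 * m) ≤ a (2 * m + 2) := by
          have := sLt_firstLe hlt
          simpa [shiftW_apply] using this
        have hb0 : a (2 * m + 2) = ⟨k - 1, by omega⟩ := by
          rw [ha0] at hle
          have := (a (2 * m + 2)).isLt
          exact Fin.le_antisymm (by rw [Fin.le_def]; simp; omega) hle
        have heq : shiftW a (2 * m) 0 = shiftW a (2 * m + 2) 0 := by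
          simp [shiftW_apply, hb0, ha0]
        have hσ' : σ (shiftW a (2 * m) 0) = false := by
          simp [shiftW_apply, ha0]; exact hσ1
        have h2 := sLt_shift_neg heq hσ' hlt
        rw [shiftW_shiftW, shiftW_shiftW] at h2
        have h2' : sLt σ (shiftW a (2 * m + 3)) (shiftW a (2 * m + 1)) := by
          convert h2 using 2 <;> omega
        have hle2 : a (2 * m + 3) ≤ a (2 * m + 1) := by
          have := sLt_firstLe h2'
          simpa [shiftW_apply] using this
        have hb1 : a (2 * m + 3) = ⟨0, hk⟩ := by
          rw [ha1] at hle2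
          exact Fin.le_antisymm hle2 (by rw [Fin.le_def]; simp)
        have heq2 : shiftW a (2 * m + 3) 0 = shiftW a (2 * m + 1) 0 := by
          simp [shiftW_apply, ha1, hb1]
        have hσ'' : σ (shiftW a (2 * m + 3) 0) = false := by
          simp [shiftW_apply, hb1]; exact hσ0
        have h3 := sLt_shift_neg heq2 hσ'' h2'
        rw [shiftW_shiftW, shiftW_shiftW] at h3
        refine ⟨by rw [show 2 * (m + 1) = 2 * m + 2 by omega]; exact hb0,
          by rw [show 2 * (m + 1) + 1 = 2 * m + 3 by omega]; exact hb1, ?_⟩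
        convert h3 using 2 <;> omega
  have hper : shiftW a 2 = a := by
    funext j
    rcases Nat.even_or_odd j with ⟨m, hm⟩ | ⟨m, hm⟩
    · rw [shiftW_apply]
      have e1 : j + 2 = 2 * (m + 1) := by omega
      have e2 : j = 2 * m := by omega
      rw [e1, e2, (key (m + 1)).1, (key m).1]
    · rw [shiftW_apply]
      have e1 : j + 2 = 2 * (m + 1) + 1 := by omega
      have e2 : j = 2 * m + 1 := by omega
      rw [e1, e2, (key (m + 1)).2.1, (key m).2.1]
  rw [hper] at h
  exact sLt_irrefl a h

end Lems2

section Main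
variable {k n : ℕ} {σ : Fin k → Bool} {π : Equiv.Perm (Fin n)} {s : Word k}

lemma hatStar_some {p v : Fin n} (h : hatStar π p = some v) :
    ∃ hlt : (π.symm p : ℕ) + 1 < n, π ⟨(π.symm p : ℕ) + 1, hlt⟩ = v := by
  unfold hatStar at h
  split at h
  · exact absurd h (by simp)
  · next hne =>
      have := (π.symm p).isLt
      exact ⟨by omega, by injection h⟩

theorem allowed_mem_Cstar' (hk : 2 ≤ k) (hn : 1 ≤ n)
    (hs : PatIs σ s π) : InCstar σ π := by
  classical
  set c : Fin n → Fin k := fun p => s ((π.symm p : Fin n) : ℕ) with hc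
  set W : Fin n → Word k := fun p => shiftW s ((π.symm p : Fin n) : ℕ) with hWdef
  set e : ℕ → ℕ := fun t => (Finset.univ.filter (fun p : Fin n => ((c p : ℕ) < t))).card with he
  have hW0 : ∀ p, W p 0 = c p := fun p => by simp [hWdef, hc, shiftW_apply]
  have hWlt : ∀ p q : Fin n, p < q → sLt σ (W p) (W q) := by
    intro p q hpq
    have := (hs (π.symm p) (π.symm q)).mp (by simpa using hpq)
    simpa [hWdef] using this
  have hWshift : ∀ p v : Fin n, hatStar π p = some v → shiftW (W p) 1 = W v := by
    intro p v hv
    obtain ⟨hlt, hπv⟩ := hatStar_some hv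
    have hsymm : π.symm v = ⟨(π.symm p : ℕ) + 1, hlt⟩ := by
      rw [← hπv, Equiv.symm_apply_apply]
    rw [hWdef]
    simp only [hsymm]
    rw [shiftW_shiftW, Nat.add_comm]
  have hmono : ∀ p q : Fin n, p ≤ q → (c p : ℕ) ≤ (c q : ℕ) := by
    intro p q hpq
    rcases eq_or_lt_of_le hpq with rfl | hlt
    · exact le_rfl
    · have := sLt_firstLe (hWlt p q hlt)
      rw [hW0, hW0] at this
      exact this
  have hrank : ∀ (p : Fin n) (t : ℕ), ((p : ℕ) < e t ↔ (c p : ℕ) < t) := by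
    intro p t
    constructor
    · intro hpe
      by_contra hcon
      have hsub : (Finset.univ.filter (fun q : Fin n => ((c q : ℕ) < t))) ⊆ Finset.Iio p := by
        intro q hq
        simp only [Finset.mem_filter] at hq
        rw [Finset.mem_Iio]
        by_contra hq2
        exact hcon (lt_of_le_of_lt (hmono p q (not_lt.mp hq2)) hq.2)
      have := Finset.card_le_card hsub
      rw [Fin.card_Iio] at this
      have hpe' : (p : ℕ) < (Finset.univ.filter (fun q : Fin n => ((c q : ℕ) < t))).card := hpe
      omega
    · intro hct
      have hsub : Finset.Iic p ⊆ (Finset.univ.filter (fun q : Fin n => ((c q : ℕ) < t))) := by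
        intro q hq
        rw [Finset.mem_Iic] at hq
        simp only [Finset.mem_filter, Finset.mem_univ, true_and]
        exact lt_of_le_of_lt (hmono q p hq) hct
      have := Finset.card_le_card hsub
      rw [Fin.card_Iic] at this
      show (p : ℕ) < (Finset.univ.filter (fun q : Fin n => ((c q : ℕ) < t))).card
      omega
  have hetop : ∀ t, e t ≤ n := by
    intro t
    rw [he]
    have := Finset.card_filter_le (Finset.univ : Finset (Fin n)) (fun p : Fin n => ((c p : ℕ) < t))
    simpa using this
  refine ⟨e, ?_, ?_, ?_, ?_, ?_, ?_, ?_, ?_⟩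
  · simp [he]
  · have hek : e k = (Finset.univ.filter (fun p : Fin n => ((c p : ℕ) < k))).card := rfl
    rw [hek, Finset.filter_true_of_mem (fun p _ => (c p).isLt)]
    simp
  · intro a b hab
    apply Finset.card_le_card
    exact Finset.monotone_filter_right _ (fun p _ h => lt_of_lt_of_le h hab)
  · -- (a)
    intro t p q hep heq hpq v w hv hw
    have h1 : ¬ ((c p : ℕ) < (t : ℕ)) := fun h => by
      have := (hrank p t).mpr h; omega
    have h2 : (c q : ℕ) < (t : ℕ) + 1 := (hrank q ((t : ℕ) + 1)).mp heq
    have h3 : (c p : ℕ) ≤ (c q : ℕ) := hmono p q (le_of_lt (by rwa [Fin.lt_def]))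
    have hcp : c p = t := Fin.ext (by omega)
    have hcq : c q = t := Fin.ext (by omega)
    have hlt : sLt σ (W p) (W q) := hWlt p q (by rwa [Fin.lt_def])
    have heq0 : W p 0 = W q 0 := by rw [hW0, hW0, hcp, hcq]
    have hστ : σ (W p 0) = σ t := by rw [hW0, hcp]
    by_cases hb : σ t = true
    · rw [if_pos hb]
      have := sLt_shift_pos heq0 (hστ.trans hb) hlt
      rw [hWshift p v hv, hWshift q w hw] at this
      have := (hs (π.symm v) (π.symm w)).mpr (by simpa [hWdef] using this)
      simpa using this
    · rw [if_neg hb]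
      have := sLt_shift_neg heq0 (by rw [hστ]; exact Bool.eq_false_iff.mpr hb) hlt
      rw [hWshift p v hv, hWshift q w hw] at this
      have := (hs (π.symm w) (π.symm v)).mpr (by simpa [hWdef] using this)
      simpa using this
  · -- (b)
    intro hk0 h0 h1 hσ0 _ hsome
    by_contra hcon
    push_neg at hcon
    have hl0 : (c ⟨0, h0⟩ : ℕ) < 1 := (hrank ⟨0, h0⟩ 1).mp (by simp only [Fin.val_mk]; omega)
    have hl1 : (c ⟨1, h1⟩ : ℕ) < 1 := (hrank ⟨1, h1⟩ 1).mp (by simp only [Fin.val_mk]; omega)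
    have hc0 : c ⟨0, h0⟩ = ⟨0, hk0⟩ := Fin.ext (by simp only [Fin.val_mk]; omega)
    have hc1 : c ⟨1, h1⟩ = ⟨0, hk0⟩ := Fin.ext (by simp only [Fin.val_mk]; omega)
    have hlt : sLt σ (W ⟨0, h0⟩) (W ⟨1, h1⟩) := hWlt _ _ (by simp only [Fin.mk_lt_mk]; omega)
    have hsp := sLt_shift_pos (by rw [hW0, hW0, hc0, hc1])
      (by rw [hW0, hc0]; exact hσ0) hlt
    rw [hWshift _ _ hsome] at hsp
    exact plusMin hk0 hσ0 (by rw [hW0, hc0]) hsp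
  · -- (c)
    intro hkk h0 h1 hσt hsome hnone
    rcases Nat.lt_or_ge n 2 with hn2 | hn2
    · have hpos : (⟨n - 2, h0⟩ : Fin n) = ⟨n - 1, h1⟩ := Fin.ext (by simp only [Fin.val_mk]; omega)
      rw [hpos, hnone] at hsome
      simp at hsome
    by_contra hcon
    push_neg at hcon
    have hle : e (k - 1) ≤ n - 2 := by omega
    have hl0 : ¬ ((c ⟨n - 2, h0⟩ : ℕ) < k - 1) := fun h => by
      have := (hrank ⟨n - 2, h0⟩ (k - 1)).mpr h
      simp only [Fin.val_mk] at this; omega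
    have hl1 : ¬ ((c ⟨n - 1, h1⟩ : ℕ) < k - 1) := fun h => by
      have := (hrank ⟨n - 1, h1⟩ (k - 1)).mpr h
      simp only [Fin.val_mk] at this; omega
    have hc0 : c ⟨n - 2, h0⟩ = ⟨k - 1, hkk⟩ := Fin.ext (by have := (c ⟨n - 2, h0⟩).isLt; simp only [Fin.val_mk]; omega)
    have hc1 : c ⟨n - 1, h1⟩ = ⟨k - 1, hkk⟩ := Fin.ext (by have := (c ⟨n - 1, h1⟩).isLt; simp only [Fin.val_mk]; omega)
    have hlt : sLt σ (W ⟨n - 2, h0⟩) (W ⟨n - 1, h1⟩) := hWlt _ _ (by simp only [Fin.mk_lt_mk]; omega)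
    have hsp := sLt_shift_pos (by rw [hW0, hW0, hc0, hc1])
      (by rw [hW0, hc0]; exact hσt) hlt
    rw [hWshift _ _ hsome] at hsp
    exact plusMax (by omega) hσt (by rw [hW0, hc1]) hsp
  · -- (d)
    intro hk0 hk1 h0 h1 h2 hσ0 hσk h0some hn2some hnone
    rcases Nat.lt_or_ge n 3 with hn3 | hn3
    · rcases Nat.lt_or_ge n 2 with hn2 | hn2
      · have hpos : (⟨0, h0⟩ : Fin n) = ⟨n - 1, h2⟩ := Fin.ext (by simp only [Fin.val_mk]; omega)
        rw [hpos, hnone] at h0some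
        simp at h0some
      · have hpos : (⟨n - 2, h1⟩ : Fin n) = ⟨0, h0⟩ := Fin.ext (by simp only [Fin.val_mk]; omega)
        rw [hpos, h0some] at hn2some
        simp only [Option.some.injEq] at hn2some
        have := congrArg Fin.val hn2some
        simp only [Fin.val_mk] at this; omega
    by_contra hcon
    push_neg at hcon
    obtain ⟨he1, hek⟩ := hcon
    have hl0 : (c ⟨0, h0⟩ : ℕ) < 1 := (hrank ⟨0, h0⟩ 1).mp (by simp only [Fin.val_mk]; omega)
    have hla : ¬ ((c ⟨n - 2, h1⟩ : ℕ) < k - 1) := fun h => by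
      have := (hrank ⟨n - 2, h1⟩ (k - 1)).mpr h
      simp only [Fin.val_mk] at this; omega
    have hlb : ¬ ((c ⟨n - 1, h2⟩ : ℕ) < k - 1) := fun h => by
      have := (hrank ⟨n - 1, h2⟩ (k - 1)).mpr h
      simp only [Fin.val_mk] at this; omega
    have hc0 : c ⟨0, h0⟩ = ⟨0, hk0⟩ := Fin.ext (by simp only [Fin.val_mk]; omega)
    have hca : c ⟨n - 2, h1⟩ = ⟨k - 1, hk1⟩ := Fin.ext (by have := (c ⟨n - 2, h1⟩).isLt; simp only [Fin.val_mk]; omega)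
    have hcb : c ⟨n - 1, h2⟩ = ⟨k - 1, hk1⟩ := Fin.ext (by have := (c ⟨n - 1, h2⟩).isLt; simp only [Fin.val_mk]; omega)
    have hlt : sLt σ (W ⟨n - 2, h1⟩) (W ⟨n - 1, h2⟩) := hWlt _ _ (by simp only [Fin.mk_lt_mk]; omega)
    have hsn := sLt_shift_neg (by rw [hW0, hW0, hca, hcb])
      (by rw [hW0, hca]; exact hσk) hlt
    rw [hWshift _ _ hn2some] at hsn
    -- hsn : sLt σ (shiftW (W ⟨n-1⟩) 1) (W ⟨0⟩)
    have hsh : shiftW (W ⟨0, h0⟩) 1 = W ⟨n - 1, h2⟩ := hWshift _ _ h0some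
    have h2' : shiftW (W ⟨0, h0⟩) 2 = shiftW (W ⟨n - 1, h2⟩) 1 := by
      funext m
      have hm : W ⟨n - 1, h2⟩ (m + 1) = shiftW (W ⟨0, h0⟩) 1 (m + 1) := by rw [hsh]
      calc shiftW (W ⟨0, h0⟩) 2 m = shiftW (W ⟨0, h0⟩) 1 (m + 1) := rfl
        _ = W ⟨n - 1, h2⟩ (m + 1) := hm.symm
        _ = shiftW (W ⟨n - 1, h2⟩) 1 m := rfl
    apply negAlt hk0 hσ0 hσk (a := W ⟨0, h0⟩) (by rw [hW0, hc0])
      (by have h' : W ⟨0, h0⟩ 1 = shiftW (W ⟨0, h0⟩) 1 0 := rfl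
          rw [h', hsh, hW0, hcb])
      (by rw [h2']; exact hsn)
  · -- (e)
    intro hk0 hk1 h0 h1 h2 hσ0 hσk hn1some h0none h1some
    rcases Nat.lt_or_ge n 3 with hn3 | hn3
    · have hpos : (⟨n - 1, h2⟩ : Fin n) = ⟨1, h1⟩ := Fin.ext (by simp only [Fin.val_mk]; omega)
      rw [hpos, h1some] at hn1some
      simp only [Option.some.injEq] at hn1some
      have := congrArg Fin.val hn1some
      simp only [Fin.val_mk] at this; omega
    by_contra hcon
    push_neg at hcon
    obtain ⟨hek, he1⟩ := hcon
    have hekn : e (k - 1) < n := lt_of_le_of_ne (hetop _) hek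
    have hl0 : (c ⟨0, h0⟩ : ℕ) < 1 := (hrank ⟨0, h0⟩ 1).mp (by simp only [Fin.val_mk]; omega)
    have hl1 : (c ⟨1, h1⟩ : ℕ) < 1 := (hrank ⟨1, h1⟩ 1).mp (by simp only [Fin.val_mk]; omega)
    have hlb : ¬ ((c ⟨n - 1, h2⟩ : ℕ) < k - 1) := fun h => by
      have := (hrank ⟨n - 1, h2⟩ (k - 1)).mpr h
      simp only [Fin.val_mk] at this; omega
    have hc0 : c ⟨0, h0⟩ = ⟨0, hk0⟩ := Fin.ext (by simp only [Fin.val_mk]; omega)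
    have hc1 : c ⟨1, h1⟩ = ⟨0, hk0⟩ := Fin.ext (by simp only [Fin.val_mk]; omega)
    have hcb : c ⟨n - 1, h2⟩ = ⟨k - 1, hk1⟩ := Fin.ext (by have := (c ⟨n - 1, h2⟩).isLt; simp only [Fin.val_mk]; omega)
    have hlt : sLt σ (W ⟨0, h0⟩) (W ⟨1, h1⟩) := hWlt _ _ (by simp only [Fin.mk_lt_mk]; omega)
    have hsn := sLt_shift_neg (by rw [hW0, hW0, hc0, hc1])
      (by rw [hW0, hc0]; exact hσ0) hlt
    rw [hWshift _ _ h1some] at hsn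
    -- hsn : sLt σ (W ⟨n-1⟩) (shiftW (W ⟨0⟩) 1)
    have hsh : shiftW (W ⟨n - 1, h2⟩) 1 = W ⟨0, h0⟩ := hWshift _ _ hn1some
    have h2' : shiftW (W ⟨n - 1, h2⟩) 2 = shiftW (W ⟨0, h0⟩) 1 := by
      funext m
      have hm : W ⟨0, h0⟩ (m + 1) = shiftW (W ⟨n - 1, h2⟩) 1 (m + 1) := by rw [hsh]
      calc shiftW (W ⟨n - 1, h2⟩) 2 m = shiftW (W ⟨n - 1, h2⟩) 1 (m + 1) := rfl
        _ = W ⟨0, h0⟩ (m + 1) := hm.symm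
        _ = shiftW (W ⟨0, h0⟩) 1 m := rfl
    apply negAlt' hk0 hσ0 hσk (a := W ⟨n - 1, h2⟩) (by rw [hW0, hcb])
      (by have h' : W ⟨n - 1, h2⟩ 1 = shiftW (W ⟨n - 1, h2⟩) 1 0 := rfl
          rw [h', hsh, hW0, hc0])
      (by rw [h2']; exact hsn)

end Main

theorem allowed_mem_Cstar (k n : ℕ) (hk : 2 ≤ k) (hn : 1 ≤ n)
    (σ : Fin k → Bool) (π : Equiv.Perm (Fin n)) (hπ : π ∈ Allowed σ n) :
    InCstar σ π := by
  obtain ⟨s, hs⟩ := hπ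
  exact allowed_mem_Cstar' hk hn hs
end

section
/- Let k ≥ 2, σ ∈ {+,−}^k and n ≥ 1. If π ∈ A_n(Σ_σ), then π satisfies condition (†). -/
/-!
Let `s` realise `π`, i.e. `π i < π j ↔ Σ^i s ≺σ Σ^j s` for `i, j < n`. Comparing first
letters shows that the values `π i` with `s i = t` form the `t`-th block of the segmentation
`e_t = #{i < n | s i < t}`. Condition (a) holds because deleting a common first letter `t`
preserves `≺σ` if `σ_t = +` and reverses it if `σ_t = −`.

If one of (b)–(e) failed, some shift `u` of `s` would begin like an extremal `p`-periodic word
`a` (`0^∞` or `(k-1)^∞` for a sign `+`, `(0 (k-1))^∞` or `((k-1) 0)^∞` when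
`σ_0 = σ_{k-1} = −`) while `Σ^p u` lies strictly between `a` and `u`. But `u` agrees with `a`
up to the first place where `Σ^p u` leaves `a`, so `Σ^p u` lies on the far side of `u`.

A bad `b` makes `Σ^{n-1-b} s = x Σ^{n-1} s` and `Σ^{n-1-2b} s = x Σ^{n-1-b} s` for a block `x`
of length `b`, so `Σ^{n-1} s` compares in the same way with the other two words, contradicting
(i).
-/

namespace SignedShift

open Finset

variable {k : ℕ} {σ : Fin k → Bool}

lemma shiftW_shiftW (s : Word k) (i j : ℕ) : shiftW (shiftW s i) j = shiftW s (i + j) := by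
  funext m
  simp only [shiftW]
  congr 1
  omega

lemma exists_first_diff {u v : Word k} (h : u ≠ v) :
    ∃ d, (∀ i < d, u i = v i) ∧ u d ≠ v d := by
  classical
  have hex : ∃ i, u i ≠ v i := Function.ne_iff.mp h
  exact ⟨Nat.find hex, fun i hi => not_not.mp (Nat.find_min hex hi), Nat.find_spec hex⟩

lemma negCount_congr {a b : Word k} {j : ℕ} (h : ∀ i < j, a i = b i) :
    negCount σ a j = negCount σ b j :=
  congrArg Finset.card <| filter_congr fun i hi => by rw [h i (mem_range.mp hi)]

lemma negCount_succ (a : Word k) (j : ℕ) :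
    negCount σ a (j + 1) = (if σ (a 0) = false then 1 else 0) + negCount σ (shiftW a 1) j := by
  rw [negCount, negCount, card_filter, card_filter, sum_range_succ']
  exact add_comm _ _

lemma negCount_eq_zero {a : Word k} {j : ℕ} (h : ∀ i, σ (a i) = true) : negCount σ a j = 0 := by
  simp [negCount, h]

lemma negCount_eq_self {a : Word k} {j : ℕ} (h : ∀ i, σ (a i) = false) : negCount σ a j = j := by
  simp [negCount, h]

lemma sLt_iff_of_first_diff {u v : Word k} {d : ℕ} (hmin : ∀ i < d, u i = v i)
    (hd : u d ≠ v d) :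
    sLt σ u v ↔
      (Even (negCount σ u d) ∧ u d < v d) ∨ (¬ Even (negCount σ u d) ∧ v d < u d) := by
  refine ⟨fun ⟨j, hj, hne, hc⟩ => ?_, fun hc => ⟨d, hmin, hd, hc⟩⟩
  obtain rfl : j = d := by
    rcases Nat.lt_trichotomy j d with h | h | h
    · exact absurd (hmin j h) hne
    · exact h
    · exact absurd (hj d h) hd
  exact hc

lemma sLt_irrefl (u : Word k) : ¬ sLt σ u u := fun ⟨_, _, hj, _⟩ => hj rfl

lemma sLt_asymm {u v : Word k} (huv : sLt σ u v) : ¬ sLt σ v u := by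
  intro hvu
  obtain ⟨d, hmin, hd⟩ := exists_first_diff fun h : u = v => sLt_irrefl (σ := σ) v (h ▸ huv)
  rw [sLt_iff_of_first_diff hmin hd] at huv
  rw [sLt_iff_of_first_diff (fun i hi => (hmin i hi).symm) hd.symm,
    negCount_congr fun i hi => (hmin i hi).symm] at hvu
  have := lt_asymm (a := u d) (b := v d)
  tauto

lemma sLt_of_head_lt {u v : Word k} (h : u 0 < v 0) : sLt σ u v :=
  ⟨0, fun _ hi => absurd hi (Nat.not_lt_zero _), h.ne, Or.inl ⟨by simp [negCount], h⟩⟩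

lemma sLt_congr_of_agree {s t s' t' : Word k} {d : ℕ} (hst : ∀ i < d, s i = t i)
    (hd : s d ≠ t d) (hs : ∀ i ≤ d, s' i = s i) (ht : ∀ i ≤ d, t' i = t i) :
    sLt σ s' t' ↔ sLt σ s t := by
  have hst' : ∀ i < d, s' i = t' i := fun i hi => by rw [hs i hi.le, ht i hi.le, hst i hi]
  rw [sLt_iff_of_first_diff hst' (by rwa [hs d le_rfl, ht d le_rfl]),
    sLt_iff_of_first_diff hst hd, hs d le_rfl, ht d le_rfl,
    negCount_congr fun i hi => hs i hi.le]

lemma sLt_iff_of_head_eq {u v : Word k} (h : u 0 = v 0) :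
    sLt σ u v ↔ if σ (u 0) = true then sLt σ (shiftW u 1) (shiftW v 1)
      else sLt σ (shiftW v 1) (shiftW u 1) := by
  by_cases huv : u = v
  · subst huv
    simp only [sLt_irrefl, ite_self]
  obtain ⟨d, hmin, hd⟩ := exists_first_diff huv
  obtain ⟨d, rfl⟩ : ∃ d', d = d' + 1 :=
    Nat.exists_eq_succ_of_ne_zero fun hd0 => hd (hd0 ▸ h)
  have hmin' : ∀ i < d, shiftW u 1 i = shiftW v 1 i := fun i hi => hmin (i + 1) (by omega)
  rw [sLt_iff_of_first_diff hmin hd, negCount_succ]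
  cases hσ : σ (u 0)
  · rw [sLt_iff_of_first_diff (fun i hi => (hmin' i hi).symm) (Ne.symm hd),
      negCount_congr fun i hi => (hmin' i hi).symm]
    simp only [if_true, if_false, Bool.false_eq_true, add_comm 1, Nat.even_add_one, not_not,
      shiftW]
    exact or_comm
  · rw [sLt_iff_of_first_diff hmin' hd]
    simp only [if_true, if_false, Bool.true_eq_false, zero_add, shiftW]

lemma sLt_shiftW_iff {s : Word k} {i j : ℕ} (h : s i = s j) :
    sLt σ (shiftW s i) (shiftW s j) ↔ if σ (s i) = true
      then sLt σ (shiftW s (i + 1)) (shiftW s (j + 1))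
      else sLt σ (shiftW s (j + 1)) (shiftW s (i + 1)) := by
  have hhead : ∀ m, shiftW s m 0 = s m := fun m => by simp [shiftW]
  rw [sLt_iff_of_head_eq (by rw [hhead, hhead, h]), hhead, shiftW_shiftW, shiftW_shiftW]

/-- `v = x u` and `w = x v` for the block `x` of the first `b` letters of `v`. -/
lemma sLt_iff_of_repeat {u v w : Word k} {b : ℕ} (hb : 1 ≤ b) (hwv : ∀ i < b, w i = v i)
    (hw : shiftW w b = v) (hv : shiftW v b = u) (huv : u ≠ v) :
    (sLt σ u v ↔ sLt σ u w) ∧ (sLt σ v u ↔ sLt σ w u) := by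
  obtain ⟨d, hmin, hd⟩ := exists_first_diff huv
  have hagree : ∀ i ≤ d, w i = v i := by
    intro i hi
    rcases Nat.lt_or_ge i b with h | h
    · exact hwv i h
    · obtain ⟨m, rfl⟩ := Nat.exists_eq_add_of_le' h
      calc w (m + b) = v m := congrFun hw m
        _ = u m := (hmin m (by omega)).symm
        _ = v (m + b) := (congrFun hv m).symm
  exact ⟨(sLt_congr_of_agree hmin hd (fun _ _ => rfl) hagree).symm,
    (sLt_congr_of_agree (fun i hi => (hmin i hi).symm) (Ne.symm hd) hagree fun _ _ => rfl).symm⟩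

lemma sLt_of_forall_ne {a v : Word k}
    (ha : ∀ j (x : Fin k), x ≠ a j →
      (Even (negCount σ a j) ∧ a j < x) ∨ (¬ Even (negCount σ a j) ∧ x < a j))
    (hv : v ≠ a) : sLt σ a v := by
  obtain ⟨d, hmin, hd⟩ := exists_first_diff (Ne.symm hv)
  exact ⟨d, hmin, hd, ha d (v d) (Ne.symm hd)⟩

lemma sLt_of_forall_ne' {a v : Word k}
    (ha : ∀ j (x : Fin k), x ≠ a j →
      (Even (negCount σ a j) ∧ x < a j) ∨ (¬ Even (negCount σ a j) ∧ a j < x))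
    (hv : v ≠ a) : sLt σ v a := by
  obtain ⟨d, hmin, hd⟩ := exists_first_diff hv
  exact ⟨d, hmin, hd, negCount_congr hmin ▸ ha d (v d) hd⟩

lemma exists_agree_of_periodic {a u : Word k} {p : ℕ} (hper : shiftW a p = a)
    (hu : ∀ i < p, u i = a i) (hne : shiftW u p ≠ u) :
    ∃ j, (∀ i ≤ j, u i = a i) ∧ (∀ i < j, shiftW u p i = a i) ∧ shiftW u p j ≠ a j := by
  obtain ⟨j, hmin, hj⟩ := exists_first_diff hne
  have hp : p ≠ 0 := by rintro rfl; exact hne rfl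
  have hagree : ∀ i < j + p, u i = a i := by
    intro i
    induction i using Nat.strong_induction_on with
    | _ i ih =>
      intro hi
      rcases Nat.lt_or_ge i p with h | h
      · exact hu i h
      · obtain ⟨m, rfl⟩ := Nat.exists_eq_add_of_le' h
        calc u (m + p) = u m := hmin m (by omega)
          _ = a m := ih m (by omega) (by omega)
          _ = a (m + p) := (congrFun hper m).symm
  refine ⟨j, fun i hi => hagree i (by omega),
    fun i hi => (hmin i hi).trans (hagree i (by omega)), ?_⟩
  rwa [← hagree j (by omega)]

lemma not_shiftW_lt_of_least {a u : Word k} {p : ℕ} (ha : ∀ v, v ≠ a → sLt σ a v)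
    (hper : shiftW a p = a) (hu : ∀ i < p, u i = a i) : ¬ sLt σ (shiftW u p) u := by
  intro hlt
  obtain ⟨j, hua, hwa, hj⟩ :=
    exists_agree_of_periodic hper hu fun h => sLt_irrefl (σ := σ) u (by rwa [h] at hlt)
  have hau : sLt σ a (shiftW u p) := ha _ fun h => hj (by rw [h])
  refine sLt_asymm ?_ hlt
  exact (sLt_congr_of_agree (fun i hi => (hwa i hi).symm) (Ne.symm hj) hua
    fun _ _ => rfl).2 hau

lemma not_lt_shiftW_of_greatest {a u : Word k} {p : ℕ} (ha : ∀ v, v ≠ a → sLt σ v a)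
    (hper : shiftW a p = a) (hu : ∀ i < p, u i = a i) : ¬ sLt σ u (shiftW u p) := by
  intro hlt
  obtain ⟨j, hua, hwa, hj⟩ :=
    exists_agree_of_periodic hper hu fun h => sLt_irrefl (σ := σ) u (by rwa [h] at hlt)
  have hua' : sLt σ (shiftW u p) a := ha _ fun h => hj (by rw [h])
  refine sLt_asymm hlt ?_
  exact (sLt_congr_of_agree hwa hj (fun _ _ => rfl) hua).2 hua'

lemma not_shiftW_succ_lt_of_eq_zero (s : Word k) (m : ℕ) (hk : 0 < k)
    (hσ : σ ⟨0, hk⟩ = true) (h0 : s m = ⟨0, hk⟩) :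
    ¬ sLt σ (shiftW s (m + 1)) (shiftW s m) := by
  rw [← shiftW_shiftW]
  refine not_shiftW_lt_of_least (a := fun _ => ⟨0, hk⟩)
    (fun v => sLt_of_forall_ne fun j x hx => ?_) rfl fun i hi => ?_
  · have : (x : ℕ) ≠ 0 := fun h => hx (Fin.ext h)
    rw [negCount_eq_zero fun _ => hσ]
    exact Or.inl ⟨Even.zero, Fin.lt_def.mpr (by simp only; omega)⟩
  · obtain rfl : i = 0 := by omega
    simpa [shiftW] using h0

lemma not_lt_shiftW_succ_of_eq_last (s : Word k) (m : ℕ) (hk : k - 1 < k)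
    (hσ : σ ⟨k - 1, hk⟩ = true) (h0 : s m = ⟨k - 1, hk⟩) :
    ¬ sLt σ (shiftW s m) (shiftW s (m + 1)) := by
  rw [← shiftW_shiftW]
  refine not_lt_shiftW_of_greatest (a := fun _ => ⟨k - 1, hk⟩)
    (fun v => sLt_of_forall_ne' fun j x hx => ?_) rfl fun i hi => ?_
  · have : (x : ℕ) ≠ k - 1 := fun h => hx (Fin.ext h)
    have := x.isLt
    rw [negCount_eq_zero fun _ => hσ]
    exact Or.inl ⟨Even.zero, Fin.lt_def.mpr (by simp only; omega)⟩
  · obtain rfl : i = 0 := by omega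
    simpa [shiftW] using h0

lemma not_shiftW_add_two_lt_of_alternating (s : Word k) (m : ℕ) (hk0 : 0 < k) (hk1 : k - 1 < k)
    (hσ0 : σ ⟨0, hk0⟩ = false) (hσ1 : σ ⟨k - 1, hk1⟩ = false)
    (h0 : s m = ⟨0, hk0⟩) (h1 : s (m + 1) = ⟨k - 1, hk1⟩) :
    ¬ sLt σ (shiftW s (m + 2)) (shiftW s m) := by
  rw [← shiftW_shiftW]
  refine not_shiftW_lt_of_least (a := fun i => if i % 2 = 0 then ⟨0, hk0⟩ else ⟨k - 1, hk1⟩)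
    (fun v => sLt_of_forall_ne fun j x hx => ?_) (funext fun i => by simp [shiftW])
    fun i hi => ?_
  · rw [negCount_eq_self fun i => by split_ifs <;> assumption]
    have hxv : (x : ℕ) ≠ if j % 2 = 0 then 0 else k - 1 := fun h =>
      hx (by split_ifs at h ⊢ <;> exact Fin.ext h)
    have := x.isLt
    rcases Nat.even_or_odd j with hj | hj
    · simp only [Nat.even_iff.mp hj, if_true] at hxv ⊢
      exact Or.inl ⟨hj, Fin.lt_def.mpr (by simp only; omega)⟩
    · simp only [Nat.odd_iff.mp hj, Nat.one_ne_zero, if_false] at hxv ⊢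
      exact Or.inr ⟨Nat.not_even_iff_odd.mpr hj, Fin.lt_def.mpr (by simp only; omega)⟩
  · interval_cases i
    · simpa [shiftW] using h0
    · simpa [shiftW, add_comm] using h1

lemma not_lt_shiftW_add_two_of_alternating (s : Word k) (m : ℕ) (hk0 : 0 < k) (hk1 : k - 1 < k)
    (hσ0 : σ ⟨0, hk0⟩ = false) (hσ1 : σ ⟨k - 1, hk1⟩ = false)
    (h0 : s m = ⟨k - 1, hk1⟩) (h1 : s (m + 1) = ⟨0, hk0⟩) :
    ¬ sLt σ (shiftW s m) (shiftW s (m + 2)) := by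
  rw [← shiftW_shiftW]
  refine not_lt_shiftW_of_greatest (a := fun i => if i % 2 = 0 then ⟨k - 1, hk1⟩ else ⟨0, hk0⟩)
    (fun v => sLt_of_forall_ne' fun j x hx => ?_) (funext fun i => by simp [shiftW])
    fun i hi => ?_
  · rw [negCount_eq_self fun i => by split_ifs <;> assumption]
    have hxv : (x : ℕ) ≠ if j % 2 = 0 then k - 1 else 0 := fun h =>
      hx (by split_ifs at h ⊢ <;> exact Fin.ext h)
    have := x.isLt
    rcases Nat.even_or_odd j with hj | hj
    · simp only [Nat.even_iff.mp hj, if_true] at hxv ⊢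
      exact Or.inl ⟨hj, Fin.lt_def.mpr (by simp only; omega)⟩
    · simp only [Nat.odd_iff.mp hj, Nat.one_ne_zero, if_false] at hxv ⊢
      exact Or.inr ⟨Nat.not_even_iff_odd.mpr hj, Fin.lt_def.mpr (by simp only; omega)⟩
  · interval_cases i
    · simpa [shiftW] using h0
    · simpa [shiftW, add_comm] using h1

section Pattern

variable {n : ℕ} {s : Word k} {π : Equiv.Perm (Fin n)}

lemma card_filter_perm_lt (π : Equiv.Perm (Fin n)) (c : Fin n) : #{j | π j < c} = c := by
  rw [← Fin.card_Iio c]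
  exact card_equiv π fun j => by simp

lemma card_filter_perm_le (π : Equiv.Perm (Fin n)) (c : Fin n) : #{j | π j ≤ c} = c + 1 := by
  rw [← Fin.card_Iic c]
  exact card_equiv π fun j => by simp

lemma hatStar_eq_some {p v : Fin n} (h : hatStar π p = some v) :
    ∃ i, ∃ hi : i + 1 < n, π ⟨i, by omega⟩ = p ∧ π ⟨i + 1, hi⟩ = v := by
  unfold hatStar at h
  split_ifs at h with hc
  exact ⟨π.symm p, by omega, by simp, Option.some.inj h⟩

/-- The segmentation read off a word realising `π`: its `t`-th block consists of the values
`π i` of the positions `i` with `s i = t`. -/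
def wordSeg (n : ℕ) (s : Word k) (t : ℕ) : ℕ := #{i : Fin n | (s i : ℕ) < t}

lemma wordSeg_zero : wordSeg n s 0 = 0 := by
  simp [wordSeg]

lemma wordSeg_top : wordSeg n s k = n := by
  simp [wordSeg]

lemma wordSeg_mono : Monotone (wordSeg n s) := fun _ _ hab =>
  card_le_card fun i hi => by simp only [mem_filter, mem_univ, true_and] at hi ⊢; omega

lemma lt_of_letter_lt (hs : PatIs σ s π) {i j : Fin n} (h : s i < s j) : π i < π j :=
  (hs i j).2 (sLt_of_head_lt (by simpa [shiftW] using h))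

lemma shiftW_injective_of_pat (hs : PatIs σ s π) {i j : Fin n}
    (h : shiftW s i = shiftW s j) : i = j := by
  refine π.injective (le_antisymm ?_ ?_) <;> refine not_lt.mp fun hlt => ?_
  · exact sLt_irrefl (σ := σ) (shiftW s j) (h ▸ (hs j i).1 hlt)
  · exact sLt_irrefl (σ := σ) (shiftW s j) (h ▸ (hs i j).1 hlt)

lemma wordSeg_letter_le (hs : PatIs σ s π) (i : Fin n) : wordSeg n s (s i) ≤ π i := by
  rw [← card_filter_perm_lt π (π i)]
  exact card_le_card fun j hj => by
    simp only [mem_filter, mem_univ, true_and] at hj ⊢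
    exact lt_of_letter_lt hs (Fin.lt_def.mpr hj)

lemma lt_wordSeg_letter_succ (hs : PatIs σ s π) (i : Fin n) :
    π i < wordSeg n s (s i + 1) := by
  have := card_le_card (s := {j | π j ≤ π i}) (t := {j : Fin n | (s j : ℕ) < s i + 1})
    fun j hj => by
      simp only [mem_filter, mem_univ, true_and] at hj ⊢
      by_contra! h
      exact absurd hj (not_le.mpr (lt_of_letter_lt hs (Fin.lt_def.mpr (by omega))))
  rwa [card_filter_perm_le] at this

lemma wordSeg_le_iff (hs : PatIs σ s π) {i : ℕ} (hi : i < n) (t : ℕ) :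
    wordSeg n s t ≤ π ⟨i, hi⟩ ↔ t ≤ s i := by
  refine ⟨fun h => ?_, fun h => (wordSeg_mono h).trans (wordSeg_letter_le hs ⟨i, hi⟩)⟩
  by_contra! hlt
  have := wordSeg_mono (n := n) (s := s) (show (s i : ℕ) + 1 ≤ t by omega)
  have : (π ⟨i, hi⟩ : ℕ) < wordSeg n s (s i + 1) := lt_wordSeg_letter_succ hs ⟨i, hi⟩
  omega

lemma mem_block_iff (hs : PatIs σ s π) {i : ℕ} (hi : i < n) (t : ℕ) :
    (wordSeg n s t ≤ π ⟨i, hi⟩ ∧ π ⟨i, hi⟩ < wordSeg n s (t + 1)) ↔ (s i : ℕ) = t := by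
  rw [← not_le, wordSeg_le_iff hs, wordSeg_le_iff hs]
  omega

lemma letter_eq_zero (hs : PatIs σ s π) (hk : 0 < k) {i : ℕ} (hi : i < n)
    (h : (π ⟨i, hi⟩ : ℕ) < wordSeg n s 1) : s i = ⟨0, hk⟩ := by
  have := wordSeg_le_iff hs hi 1
  exact Fin.ext (by simp only; omega)

lemma letter_eq_last (hs : PatIs σ s π) (hk : k - 1 < k) {i : ℕ} (hi : i < n)
    (h : wordSeg n s (k - 1) ≤ π ⟨i, hi⟩) : s i = ⟨k - 1, hk⟩ := by
  have := (wordSeg_le_iff hs hi (k - 1)).1 h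
  have := (s i).isLt
  exact Fin.ext (by simp only; omega)

lemma hatStar_lt_of_mem_block (hs : PatIs σ s π) (t : Fin k) (p q : Fin n)
    (hp : wordSeg n s t ≤ p) (hq : (q : ℕ) < wordSeg n s (t + 1)) (hpq : (p : ℕ) < q)
    (v w : Fin n) (hv : hatStar π p = some v) (hw : hatStar π q = some w) :
    if σ t = true then v < w else w < v := by
  obtain ⟨i, hi, rfl, rfl⟩ := hatStar_eq_some hv
  obtain ⟨j, hj, rfl, rfl⟩ := hatStar_eq_some hw
  have := wordSeg_le_iff hs (i := i) (by omega) t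
  have := wordSeg_le_iff hs (i := i) (by omega) (t + 1)
  have := wordSeg_le_iff hs (i := j) (by omega) t
  have := wordSeg_le_iff hs (i := j) (by omega) (t + 1)
  have hti : s i = t := Fin.ext (by omega)
  have htj : s j = t := Fin.ext (by omega)
  have hlt := (hs ⟨i, by omega⟩ ⟨j, by omega⟩).1 hpq
  rw [sLt_shiftW_iff (hti.trans htj.symm), hti] at hlt
  split_ifs at hlt ⊢
  · exact (hs ⟨i + 1, hi⟩ ⟨j + 1, hj⟩).2 hlt
  · exact (hs ⟨j + 1, hj⟩ ⟨i + 1, hi⟩).2 hlt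

lemma wordSeg_one_le_one (hs : PatIs σ s π) (hk : 0 < k) (hσ : σ ⟨0, hk⟩ = true)
    (h0 : 0 < n) (h1 : 1 < n) (hS : hatStar π ⟨1, h1⟩ = some ⟨0, h0⟩) :
    wordSeg n s 1 ≤ 1 := by
  obtain ⟨i, hi, hπi, hπi1⟩ := hatStar_eq_some hS
  by_contra! he
  have hsi := letter_eq_zero hs hk (i := i) (by omega) (by rw [hπi]; exact he)
  refine not_shiftW_succ_lt_of_eq_zero s i hk hσ hsi ((hs ⟨i + 1, hi⟩ ⟨i, by omega⟩).1 ?_)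
  rw [hπi, hπi1]
  exact Fin.lt_def.mpr zero_lt_one

lemma pred_le_wordSeg_pred (hs : PatIs σ s π) (hk : k - 1 < k) (hσ : σ ⟨k - 1, hk⟩ = true)
    (h0 : n - 2 < n) (h1 : n - 1 < n) (hS : hatStar π ⟨n - 2, h0⟩ = some ⟨n - 1, h1⟩) :
    n - 1 ≤ wordSeg n s (k - 1) := by
  obtain ⟨i, hi, hπi, hπi1⟩ := hatStar_eq_some hS
  by_contra! he
  have hsi := letter_eq_last hs hk (i := i) (by omega) (by rw [hπi]; simp only; omega)
  refine not_lt_shiftW_succ_of_eq_last s i hk hσ hsi ((hs ⟨i, by omega⟩ ⟨i + 1, hi⟩).1 ?_)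
  rw [hπi, hπi1]
  exact Fin.lt_def.mpr (by simp only; omega)

lemma wordSeg_one_eq_zero_or_pred_le (hs : PatIs σ s π) (hk0 : 0 < k) (hk1 : k - 1 < k)
    (h0 : 0 < n) (h1 : n - 2 < n) (h2 : n - 1 < n)
    (hσ0 : σ ⟨0, hk0⟩ = false) (hσ1 : σ ⟨k - 1, hk1⟩ = false)
    (hA : hatStar π ⟨0, h0⟩ = some ⟨n - 1, h2⟩) (hB : hatStar π ⟨n - 2, h1⟩ = some ⟨0, h0⟩) :
    wordSeg n s 1 = 0 ∨ n - 1 ≤ wordSeg n s (k - 1) := by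
  obtain ⟨i, hi, hπi, hπi1⟩ := hatStar_eq_some hA
  obtain ⟨j, hj, hπj, hπj1⟩ := hatStar_eq_some hB
  obtain rfl : j + 1 = i := by simpa using π.injective (hπj1.trans hπi.symm)
  by_contra! he
  have hs0 := letter_eq_last hs hk1 (i := j) (by omega) (by rw [hπj]; simp only; omega)
  have hs1 := letter_eq_zero hs hk0 hj (by rw [hπj1]; simp only; omega)
  have hs2 := letter_eq_last hs hk1 hi (by rw [hπi1]; simp only; omega)
  have hlt := (hs ⟨j, by omega⟩ ⟨j + 2, hi⟩).1
    (by rw [hπj, hπi1]; exact Fin.lt_def.mpr (by simp only; omega))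
  rw [sLt_shiftW_iff (hs0.trans hs2.symm), hs0, hσ1, if_neg Bool.false_ne_true] at hlt
  exact not_shiftW_add_two_lt_of_alternating s (j + 1) hk0 hk1 hσ0 hσ1 hs1 hs2 hlt

lemma wordSeg_pred_eq_or_wordSeg_one_le_one (hs : PatIs σ s π) (hk0 : 0 < k)
    (hk1 : k - 1 < k) (h0 : 0 < n) (h1 : 1 < n) (h2 : n - 1 < n)
    (hσ0 : σ ⟨0, hk0⟩ = false) (hσ1 : σ ⟨k - 1, hk1⟩ = false)
    (hA : hatStar π ⟨n - 1, h2⟩ = some ⟨0, h0⟩) (hB : hatStar π ⟨1, h1⟩ = some ⟨n - 1, h2⟩) :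
    wordSeg n s (k - 1) = n ∨ wordSeg n s 1 ≤ 1 := by
  obtain ⟨i, hi, hπi, hπi1⟩ := hatStar_eq_some hA
  obtain ⟨j, hj, hπj, hπj1⟩ := hatStar_eq_some hB
  obtain rfl : j + 1 = i := by simpa using π.injective (hπj1.trans hπi.symm)
  by_contra! he
  have htop := wordSeg_mono (n := n) (s := s) (Nat.sub_le k 1)
  rw [wordSeg_top] at htop
  have hs0 := letter_eq_zero hs hk0 (i := j) (by omega) (by rw [hπj]; simp only; omega)
  have hs1 := letter_eq_last hs hk1 hj (by rw [hπj1]; simp only; omega)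
  have hs2 := letter_eq_zero hs hk0 hi (by rw [hπi1]; simp only; omega)
  have hlt := (hs ⟨j + 2, hi⟩ ⟨j, by omega⟩).1
    (by rw [hπj, hπi1]; exact Fin.lt_def.mpr (by simp only; omega))
  rw [sLt_shiftW_iff (hs2.trans hs0.symm), hs2, hσ0, if_neg Bool.false_ne_true] at hlt
  exact not_lt_shiftW_add_two_of_alternating s (j + 1) hk0 hk1 hσ0 hσ1 hs1 hs2 hlt

lemma not_daggerBad (hs : PatIs σ s π) (b : ℕ) : ¬ DaggerBad k π (wordSeg n s) b := by
  rintro ⟨hb1, hbn, hpat, hblock⟩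
  have hrep : ∀ i, 1 ≤ i → i ≤ b → s (n - 1 - b - i) = s (n - 1 - i) := fun i hi1 hib => by
    have := hblock i hi1 hib (s (n - 1 - b - i)) (s _).isLt
    rw [mem_block_iff hs, mem_block_iff hs] at this
    exact Fin.ext (this.1 rfl).symm
  have hne : shiftW s (n - 1) ≠ shiftW s (n - 1 - b) := fun h => by
    have := shiftW_injective_of_pat hs (i := ⟨n - 1, by omega⟩) (j := ⟨n - 1 - b, by omega⟩) h
    simp only [Fin.mk.injEq] at this
    omega
  have key := sLt_iff_of_repeat (σ := σ) (w := shiftW s (n - 1 - 2 * b)) hb1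
    (fun i hi => by
      simp only [shiftW]
      rw [show i + (n - 1 - 2 * b) = n - 1 - b - (b - i) by omega,
        show i + (n - 1 - b) = n - 1 - (b - i) by omega]
      exact hrep (b - i) (by omega) (by omega))
    (by rw [shiftW_shiftW, show n - 1 - 2 * b + b = n - 1 - b by omega])
    (by rw [shiftW_shiftW, show n - 1 - b + b = n - 1 by omega]) hne
  rcases hpat with ⟨h1, h2⟩ | ⟨h1, h2⟩
  · exact sLt_asymm (key.1.1 ((hs _ _).1 h2)) ((hs _ _).1 h1)
  · exact sLt_asymm ((hs _ _).1 h2) (key.2.1 ((hs _ _).1 h1))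

end Pattern

end SignedShift

open SignedShift

theorem allowed_satisfies_dagger_general (k n : ℕ)
    (σ : Fin k → Bool) (π : Equiv.Perm (Fin n)) (hπ : π ∈ Allowed σ n) :
    Dagger σ π := by
  obtain ⟨s, hs⟩ := hπ
  refine ⟨wordSeg n s, ⟨wordSeg_zero, wordSeg_top, wordSeg_mono, hatStar_lt_of_mem_block hs,
    fun hk0 h0 h1 hσ _ hS => wordSeg_one_le_one hs hk0 hσ h0 h1 hS,
    fun hk1 h0 h1 hσ hS _ => pred_le_wordSeg_pred hs hk1 hσ h0 h1 hS,
    fun hk0 hk1 h0 h1 h2 hσ0 hσ1 hA hB _ =>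
      wordSeg_one_eq_zero_or_pred_le hs hk0 hk1 h0 h1 h2 hσ0 hσ1 hA hB,
    fun hk0 hk1 h0 h1 h2 hσ0 hσ1 hA _ hB =>
      wordSeg_pred_eq_or_wordSeg_one_le_one hs hk0 hk1 h0 h1 h2 hσ0 hσ1 hA hB⟩,
    not_daggerBad hs⟩

theorem allowed_satisfies_dagger (k n : ℕ) (hk : 2 ≤ k) (hn : 1 ≤ n)
    (σ : Fin k → Bool) (π : Equiv.Perm (Fin n)) (hπ : π ∈ Allowed σ n) :
    Dagger σ π :=
  allowed_satisfies_dagger_general k n σ π hπ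
end

section
/- Let k ≥ 2, σ ∈ {+,−}^k, n ≥ 1, and let π ∈ S_n satisfy 1 < π_n < n, ĥπ* ∈ C^{σ,*}, and condition (†). Fix a *-σ-segmentation of ĥπ* as in (†) with associated π-monotone word s_1⋯s_n, let x be the index with π_x = π_n + 1 and p = s_x⋯s_{n−1}, and let y be the index with π_y = π_n − 1 and p' = s_y⋯s_{n−1}. Then p is either primitive or p = q² for some primitive word q with n(q) odd, and the same holds for p'. -/
section Aux

variable {α : Type*}

lemma flatten_replicate_length (m : ℕ) (q : List α) :
    ((List.replicate m q).flatten).length = m * q.length := by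
  induction m with
  | zero => simp
  | succ m ih => simp [List.replicate_succ, ih, Nat.succ_mul]; ring

lemma flatten_replicate_add (a b : ℕ) (q : List α) :
    (List.replicate (a + b) q).flatten
      = (List.replicate a q).flatten ++ (List.replicate b q).flatten := by
  induction a with
  | zero => simp
  | succ a ih =>
    have : a + 1 + b = (a + b) + 1 := by omega
    rw [this, List.replicate_succ, List.flatten_cons, ih, List.replicate_succ,
      List.flatten_cons, List.append_assoc]

lemma flatten_replicate_mul (a b : ℕ) (q : List α) :
    (List.replicate (a * b) q).flatten
      = (List.replicate a ((List.replicate b q).flatten)).flatten := by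
  induction a with
  | zero => simp
  | succ a ih =>
    rw [Nat.succ_mul, flatten_replicate_add, ih, List.replicate_succ']
    simp

lemma getElem_flatten_replicate (m : ℕ) (q : List α) (hq : 0 < q.length)
    (j : ℕ) (hj : j < m * q.length) :
    ((List.replicate m q).flatten)[j]'(by rw [flatten_replicate_length]; exact hj)
      = q[j % q.length]'(Nat.mod_lt _ hq) := by
  induction m generalizing j with
  | zero => omega
  | succ m ih =>
    simp only [List.replicate_succ, List.flatten_cons]
    by_cases h : j < q.length
    · rw [List.getElem_append_left h]
      congr 1
      exact (Nat.mod_eq_of_lt h).symm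
    · rw [List.getElem_append_right (by omega)]
      have hj' : j - q.length < m * q.length := by
        have h2 : (m+1) * q.length = m * q.length + q.length := Nat.succ_mul m q.length
        omega
      rw [ih _ hj']
      congr 1
      conv_rhs => rw [show j = q.length + (j - q.length) by omega]
      rw [Nat.add_mod_left]

/-- every non-primitive nonempty word is a power (≥2) of a primitive word -/
lemma exists_prim_root {k : ℕ} :
    ∀ (N : ℕ) (p : List (Fin k)), p.length = N → p ≠ [] → ¬ PrimitiveW p →
      ∃ (q : List (Fin k)) (m : ℕ), PrimitiveW q ∧ 2 ≤ m ∧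
        p = (List.replicate m q).flatten := by
  intro N
  induction N using Nat.strong_induction_on with
  | _ N ih =>
    intro p hpN hpne hp
    rw [PrimitiveW] at hp
    push_neg at hp
    obtain ⟨r, m, hr, hm, hpr⟩ := hp
    by_cases hrprim : PrimitiveW r
    · exact ⟨r, m, hrprim, hm, hpr⟩
    · have hrne : r ≠ [] := by
        intro h
        rw [h] at hpr
        simp at hpr
        exact hpne hpr
      obtain ⟨q, m', hq, hm', hrq⟩ := ih r.length (by omega) r rfl hrne hrprim
      refine ⟨q, m * m', hq, by nlinarith, ?_⟩
      rw [flatten_replicate_mul, ← hrq, hpr]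

end Aux
section Aux2

variable {k n : ℕ}

lemma segLetter_spec (hk : 0 < k) {e : ℕ → ℕ} (h0 : e 0 = 0) (hkn : e k = n)
    (hm : Monotone e) {v : ℕ} (hv : v < n) :
    e (segLetter hk e v : ℕ) ≤ v ∧ v < e ((segLetter hk e v : ℕ) + 1) := by
  have hmem : (k - 1) ∈ {t : ℕ | v < e (t + 1)} := by
    simp only [Set.mem_setOf_eq]
    have : k - 1 + 1 = k := by omega
    rw [this, hkn]; exact hv
  have hne : {t : ℕ | v < e (t + 1)}.Nonempty := ⟨_, hmem⟩
  have hle : sInf {t : ℕ | v < e (t + 1)} ≤ k - 1 := Nat.sInf_le hmem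
  have hval : (segLetter hk e v : ℕ) = sInf {t : ℕ | v < e (t + 1)} := by
    simp [segLetter, Nat.min_eq_right hle]
  rw [hval]
  constructor
  · rcases Nat.eq_zero_or_pos (sInf {t : ℕ | v < e (t + 1)}) with h | h
    · rw [h, h0]; omega
    · have hnm : sInf {t : ℕ | v < e (t + 1)} - 1 ∉ {t : ℕ | v < e (t + 1)} :=
        Nat.notMem_of_lt_sInf (by omega)
      simp only [Set.mem_setOf_eq, not_lt] at hnm
      have : sInf {t : ℕ | v < e (t + 1)} - 1 + 1 = sInf {t : ℕ | v < e (t + 1)} := by omega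
      rwa [this] at hnm
  · exact Nat.sInf_mem hne

lemma seg_uniq {e : ℕ → ℕ} (hm : Monotone e) {t t' v : ℕ}
    (h1 : e t ≤ v) (h2 : v < e (t + 1)) (h3 : e t' ≤ v) (h4 : v < e (t' + 1)) :
    t = t' := by
  rcases lt_trichotomy t t' with h | h | h
  · have := hm (show t + 1 ≤ t' by omega); omega
  · exact h
  · have := hm (show t' + 1 ≤ t by omega); omega

lemma block_iff (hk : 0 < k) {e : ℕ → ℕ} (h0 : e 0 = 0) (hkn : e k = n)
    (hm : Monotone e) {v1 v2 : ℕ} (hv1 : v1 < n) (hv2 : v2 < n)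
    (hL : segLetter hk e v1 = segLetter hk e v2) (t : ℕ) :
    (e t ≤ v1 ∧ v1 < e (t + 1)) ↔ (e t ≤ v2 ∧ v2 < e (t + 1)) := by
  obtain ⟨ha1, ha2⟩ := segLetter_spec hk h0 hkn hm hv1
  obtain ⟨hb1, hb2⟩ := segLetter_spec hk h0 hkn hm hv2
  rw [hL] at ha1 ha2
  constructor
  · rintro ⟨hc1, hc2⟩
    have := seg_uniq hm hc1 hc2 ha1 ha2
    subst this; exact ⟨hb1, hb2⟩
  · rintro ⟨hc1, hc2⟩
    have := seg_uniq hm hc1 hc2 hb1 hb2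
    subst this; exact ⟨ha1, ha2⟩

/-- total version of `π` on ℕ indices -/
def Vv (hn : 0 < n) (π : Equiv.Perm (Fin n)) (i : ℕ) : ℕ :=
  (π ⟨i % n, Nat.mod_lt _ hn⟩ : ℕ)

lemma Vv_eq (hn : 0 < n) (π : Equiv.Perm (Fin n)) {i : ℕ} (h : i < n) :
    Vv hn π i = (π ⟨i, h⟩ : ℕ) := by
  have : (⟨i % n, Nat.mod_lt _ hn⟩ : Fin n) = ⟨i, h⟩ := by
    ext; simp [Nat.mod_eq_of_lt h]
  rw [Vv, this]

lemma Vv_lt (hn : 0 < n) (π : Equiv.Perm (Fin n)) (i : ℕ) : Vv hn π i < n :=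
  (π _).isLt

lemma Vv_inj (hn : 0 < n) (π : Equiv.Perm (Fin n)) {i j : ℕ} (hi : i < n) (hj : j < n)
    (h : Vv hn π i = Vv hn π j) : i = j := by
  rw [Vv_eq hn π hi, Vv_eq hn π hj] at h
  have := π.injective (Fin.ext h)
  simpa using this

/-- total version of the monotone-word letter -/
noncomputable def ellv (hk : 0 < k) (hn : 0 < n) (e : ℕ → ℕ) (π : Equiv.Perm (Fin n))
    (i : ℕ) : Fin k :=
  segLetter hk e (Vv hn π i)

lemma hatStar_next (π : Equiv.Perm (Fin n)) (i : ℕ) (h1 : i + 1 < n) (h2 : i + 1 ≠ n) :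
    hatStar π (π ⟨i, by omega⟩) = some (π ⟨i + 1, h1⟩) := by
  have h : π.symm (π ⟨i, by omega⟩) = ⟨i, by omega⟩ := Equiv.symm_apply_apply _ _
  rw [hatStar]
  rw [dif_neg]
  · congr 1
    apply congrArg
    ext
    simp [h]
  · rw [h]; simp; omega

end Aux2
section Aux3

variable {k n : ℕ}

lemma stepL (hk : 0 < k) (hn : 0 < n) {e : ℕ → ℕ} {σ : Fin k → Bool}
    {π : Equiv.Perm (Fin n)} (he : IsStarSeg σ π e)
    {i i' : ℕ} (hi : i + 1 ≤ n - 1) (hi' : i' + 1 ≤ n - 1)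
    (hl : ellv hk hn e π i = ellv hk hn e π i')
    (hlt : Vv hn π i < Vv hn π i') :
    (σ (ellv hk hn e π i) = true → Vv hn π (i + 1) < Vv hn π (i' + 1)) ∧
    (σ (ellv hk hn e π i) = false → Vv hn π (i' + 1) < Vv hn π (i + 1)) := by
  obtain ⟨h0, hkn, hmono, ha, -⟩ := he
  set t : Fin k := ellv hk hn e π i with ht
  have hin : i < n := by omega
  have hin' : i' < n := by omega
  have spec1 := segLetter_spec hk h0 hkn hmono (Vv_lt hn π i)
  have spec2 := segLetter_spec hk h0 hkn hmono (Vv_lt hn π i')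
  rw [show segLetter hk e (Vv hn π i) = t from rfl] at spec1
  rw [show segLetter hk e (Vv hn π i') = t from hl.symm] at spec2
  have hv1 : Vv hn π i = ((π ⟨i, hin⟩ : Fin n) : ℕ) := Vv_eq hn π hin
  have hv2 : Vv hn π i' = ((π ⟨i', hin'⟩ : Fin n) : ℕ) := Vv_eq hn π hin'
  have hs1 : hatStar π (π ⟨i, hin⟩) = some (π ⟨i + 1, by omega⟩) :=
    hatStar_next π i (by omega) (by omega)
  have hs2 : hatStar π (π ⟨i', hin'⟩) = some (π ⟨i' + 1, by omega⟩) :=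
    hatStar_next π i' (by omega) (by omega)
  have key := ha t (π ⟨i, hin⟩) (π ⟨i', hin'⟩)
    (by rw [← hv1]; exact spec1.1) (by rw [← hv2]; exact spec2.2)
    (by rw [← hv1, ← hv2]; exact hlt) _ _ hs1 hs2
  have hw1 : Vv hn π (i + 1) = ((π ⟨i + 1, by omega⟩ : Fin n) : ℕ) := Vv_eq hn π (by omega)
  have hw2 : Vv hn π (i' + 1) = ((π ⟨i' + 1, by omega⟩ : Fin n) : ℕ) := Vv_eq hn π (by omega)
  constructor
  · intro hσ
    rw [if_pos hσ] at key
    rw [hw1, hw2]; exact key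
  · intro hσ
    rw [if_neg (by simp [hσ])] at key
    rw [hw1, hw2]; exact key

/-- count of negative letters along positions a, a+1, …, a+d-1 -/
noncomputable def cntNeg (hk : 0 < k) (hn : 0 < n) (e : ℕ → ℕ) (σ : Fin k → Bool)
    (π : Equiv.Perm (Fin n)) (a d : ℕ) : ℕ :=
  (((List.range d).filter (fun r => σ (ellv hk hn e π (a + r)) = false))).length

lemma cntNeg_succ (hk : 0 < k) (hn : 0 < n) (e : ℕ → ℕ) (σ : Fin k → Bool)
    (π : Equiv.Perm (Fin n)) (a d : ℕ) :
    cntNeg hk hn e σ π a (d + 1) =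
      cntNeg hk hn e σ π a d + (if σ (ellv hk hn e π (a + d)) = false then 1 else 0) := by
  rw [cntNeg, List.range_succ, List.filter_append, List.length_append]
  rw [cntNeg]
  congr 1
  by_cases h : σ (ellv hk hn e π (a + d)) = false <;> simp [h]

lemma propL (hk : 0 < k) (hn : 0 < n) {e : ℕ → ℕ} {σ : Fin k → Bool}
    {π : Equiv.Perm (Fin n)} (he : IsStarSeg σ π e) :
    ∀ d a c, a + d ≤ n - 1 → c + d ≤ n - 1 →
      (∀ r, r < d → ellv hk hn e π (a + r) = ellv hk hn e π (c + r)) →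
      Vv hn π a < Vv hn π c →
      (Even (cntNeg hk hn e σ π a d) → Vv hn π (a + d) < Vv hn π (c + d)) ∧
      (¬ Even (cntNeg hk hn e σ π a d) → Vv hn π (c + d) < Vv hn π (a + d)) := by
  intro d
  induction d with
  | zero =>
    intro a c _ _ _ hlt
    constructor
    · intro _; simpa using hlt
    · intro h; exact absurd (by simp [cntNeg] : Even (cntNeg hk hn e σ π a 0)) h
  | succ d ih =>
    intro a c hac hcc hl hlt
    obtain ⟨ihe, iho⟩ := ih a c (by omega) (by omega) (fun r hr => hl r (by omega)) hlt
    have hld : ellv hk hn e π (a + d) = ellv hk hn e π (c + d) := hl d (by omega)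
    have e1 : a + (d + 1) = (a + d) + 1 := by omega
    have e2 : c + (d + 1) = (c + d) + 1 := by omega
    rw [cntNeg_succ, e1, e2]
    by_cases hev : Even (cntNeg hk hn e σ π a d)
    · have h1 := ihe hev
      by_cases hσ : σ (ellv hk hn e π (a + d)) = false
      · have hres := (stepL hk hn he (by omega) (by omega) hld h1).2 hσ
        rw [if_pos hσ]
        constructor
        · intro h; exact absurd hev (Nat.even_add_one.mp h)
        · intro _; exact hres
      · have hσt : σ (ellv hk hn e π (a + d)) = true := by
          simpa using hσ
        have hres := (stepL hk hn he (by omega) (by omega) hld h1).1 hσt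
        rw [if_neg hσ]
        constructor
        · intro _; exact hres
        · intro h; simp only [Nat.add_zero] at h; exact absurd hev h
    · have h1 := iho hev
      have hld' : ellv hk hn e π (c + d) = ellv hk hn e π (a + d) := hld.symm
      by_cases hσ : σ (ellv hk hn e π (a + d)) = false
      · have hσc : σ (ellv hk hn e π (c + d)) = false := by rw [hld']; exact hσ
        have hres := (stepL hk hn he (by omega) (by omega) hld' h1).2 hσc
        rw [if_pos hσ]
        constructor
        · intro _; exact hres
        · intro h; exact absurd (Nat.even_add_one.mpr hev) h
      · have hσc : σ (ellv hk hn e π (c + d)) = true := by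
          rw [hld']; simpa using hσ
        have hres := (stepL hk hn he (by omega) (by omega) hld' h1).1 hσc
        rw [if_neg hσ]
        constructor
        · intro h; simp only [Nat.add_zero] at h; exact absurd h hev
        · intro _; exact hres

end Aux3
section Aux4

variable {k n : ℕ}

lemma monoWord_take_drop_getElem (hk : 0 < k) (hn : 0 < n) (e : ℕ → ℕ)
    (π : Equiv.Perm (Fin n)) (z i : ℕ) (hi : i < n - 1 - z) :
    (((monoWord hk e π).take (n - 1)).drop z)[i]'(by
      simp [monoWord]; omega) = ellv hk hn e π (z + i) := by
  have h1 : z + i < n - 1 := by omega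
  have h2 : z + i < n := by omega
  rw [List.getElem_drop, List.getElem_take]
  simp only [monoWord, List.getElem_map, List.getElem_finRange]
  rw [ellv, Vv_eq hn π h2]
  congr 1
section Aux5

variable {k n : ℕ}

lemma monoWord_take_drop_length (hk : 0 < k) (e : ℕ → ℕ)
    (π : Equiv.Perm (Fin n)) (z : ℕ) (hz : z ≤ n - 1) :
    (((monoWord hk e π).take (n - 1)).drop z).length = n - 1 - z := by
  simp [monoWord]

lemma getElem_congr_list {α : Type*} {l l' : List α} (h : l = l') (i : ℕ)
    (hi : i < l.length) : l[i]'hi = l'[i]'(h ▸ hi) := by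
  subst h; rfl

lemma getElem_congr_idx' {α : Type*} (l : List α) {i j : ℕ} (h : i = j)
    (hi : i < l.length) : l[i]'hi = l[j]'(h ▸ hi) := by
  subst h; rfl

set_option maxHeartbeats 1600000 in
theorem main_one (hk2 : 1 < k) (hn1 : 0 < n)
    (σ : Fin k → Bool) (π : Equiv.Perm (Fin n))
    (hlo : 0 < (π ⟨n - 1, by omega⟩ : ℕ)) (hhi : (π ⟨n - 1, by omega⟩ : ℕ) < n - 1)
    (e : ℕ → ℕ) (he : IsStarSeg σ π e) (hD : ∀ b : ℕ, ¬ DaggerBad k π e b)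
    (z0 : Fin n)
    (hadj : (π z0 : ℕ) = (π ⟨n - 1, by omega⟩ : ℕ) + 1 ∨
      (π z0 : ℕ) + 1 = (π ⟨n - 1, by omega⟩ : ℕ)) :
    PrimitiveW (((monoWord (by omega : 0 < k) e π).take (n - 1)).drop (z0 : ℕ)) ∨
      ∃ q : List (Fin k),
        ((monoWord (by omega : 0 < k) e π).take (n - 1)).drop (z0 : ℕ) = q ++ q ∧
        PrimitiveW q ∧ Odd (negCountL σ q) := by
  have hk0 : 0 < k := by omega
  have hn0 : 0 < n := hn1
  have hn3 : 3 ≤ n := by omega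
  obtain ⟨Pn, hPn⟩ : ∃ v : ℕ, v = (π ⟨n - 1, by omega⟩ : ℕ) := ⟨_, rfl⟩
  rw [← hPn] at hlo hhi hadj
  by_cases hp : PrimitiveW (((monoWord (by omega : 0 < k) e π).take (n - 1)).drop (z0 : ℕ))
  · exact Or.inl hp
  obtain ⟨z, hz_def⟩ : ∃ z : ℕ, z = (z0 : ℕ) := ⟨_, rfl⟩
  obtain ⟨p, hp_def⟩ : ∃ l : List (Fin k),
      l = ((monoWord (by omega : 0 < k) e π).take (n - 1)).drop (z0 : ℕ) := ⟨_, rfl⟩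
  rw [← hp_def] at hp ⊢
  have hz : z < n := by rw [hz_def]; exact z0.isLt
  have hzne : z ≠ n - 1 := by
    intro h
    have hz0 : z0 = (⟨n - 1, by omega⟩ : Fin n) := Fin.ext (show (z0 : ℕ) = n - 1 by omega)
    rw [hz0, ← hPn] at hadj
    omega
  have hzle : z ≤ n - 2 := by omega
  have hplen : p.length = n - 1 - z := by
    rw [hp_def, hz_def]
    exact monoWord_take_drop_length hk0 e π _ (by omega)
  have hpne : p ≠ [] := by
    intro h
    rw [h] at hplen
    simp at hplen
    omega
  obtain ⟨q, m, hqprim, hm2, hpq⟩ := exists_prim_root p.length p rfl hpne hp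
  obtain ⟨b', hb_def⟩ : ∃ b : ℕ, b = q.length := ⟨_, rfl⟩
  have hLb : n - 1 - z = m * b' := by
    rw [← hplen, hpq, flatten_replicate_length, ← hb_def]
  have hb1 : 1 ≤ b' := by
    rcases Nat.eq_zero_or_pos b' with h | h
    · rw [h] at hLb; simp at hLb; omega
    · exact h
  have hbL : b' ≤ m * b' := Nat.le_mul_of_pos_left _ (by omega)
  have h2bL : 2 * b' ≤ m * b' := Nat.mul_le_mul_right _ (by omega)
  -- getElem lemmas
  have hpget : ∀ i (hi : i < n - 1 - z),
      p[i]'(by rw [hplen]; exact hi) = ellv hk0 hn0 e π (z + i) := by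
    intro i hi
    calc p[i]'(by rw [hplen]; exact hi)
        = (((monoWord (by omega : 0 < k) e π).take (n - 1)).drop (z0 : ℕ))[i]'(by
            rw [← hp_def, hplen]; exact hi) := getElem_congr_list hp_def i _
      _ = ellv hk0 hn0 e π ((z0 : ℕ) + i) :=
          monoWord_take_drop_getElem hk0 hn0 e π (z0 : ℕ) i (by omega)
      _ = ellv hk0 hn0 e π (z + i) := by rw [hz_def]
  have hpper : ∀ i (hi : i < n - 1 - z),
      p[i]'(by rw [hplen]; exact hi) = q[i % b']'(by
        rw [← hb_def]; exact Nat.mod_lt _ (by omega)) := by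
    intro i hi
    have h1 : i < m * q.length := by rw [← hb_def]; omega
    calc p[i]'(by rw [hplen]; exact hi)
        = ((List.replicate m q).flatten)[i]'(by rw [flatten_replicate_length]; exact h1) :=
          getElem_congr_list hpq i _
      _ = q[i % q.length]'(Nat.mod_lt _ (by omega)) :=
          getElem_flatten_replicate m q (by omega) i h1
      _ = q[i % b']'(by rw [← hb_def]; exact Nat.mod_lt _ (by omega)) :=
          getElem_congr_idx' q (by rw [hb_def]) _
  have hellq : ∀ i (hi : i < n - 1 - z),
      ellv hk0 hn0 e π (z + i) = q[i % b']'(by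
        rw [← hb_def]; exact Nat.mod_lt _ (by omega)) :=
    fun i hi => (hpget i hi).symm.trans (hpper i hi)
  have hper : ∀ j, z ≤ j → j + b' ≤ n - 2 →
      ellv hk0 hn0 e π (j + b') = ellv hk0 hn0 e π j := by
    intro j hj1 hj2
    have h1 : j + b' - z < n - 1 - z := by omega
    have h2 : j - z < n - 1 - z := by omega
    have eA : j + b' = z + (j + b' - z) := by omega
    have eB : j = z + (j - z) := by omega
    calc ellv hk0 hn0 e π (j + b')
        = ellv hk0 hn0 e π (z + (j + b' - z)) := by rw [← eA]
      _ = q[(j + b' - z) % b']'(by rw [← hb_def]; exact Nat.mod_lt _ (by omega)) :=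
          hellq _ h1
      _ = q[(j - z) % b']'(by rw [← hb_def]; exact Nat.mod_lt _ (by omega)) := by
          apply getElem_congr_idx' q
          rw [show j + b' - z = (j - z) + b' by omega, Nat.add_mod_right]
      _ = ellv hk0 hn0 e π (z + (j - z)) := (hellq _ h2).symm
      _ = ellv hk0 hn0 e π j := by rw [← eB]
  have hshift : ∀ a r, z ≤ a → (a - z) % b' = 0 → a + b' ≤ n - 1 → r < b' →
      ellv hk0 hn0 e π (a + r) = ellv hk0 hn0 e π (z + r) := by
    intro a r hza hmod hab hr
    have h1 : a + r - z < n - 1 - z := by omega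
    have h2 : r < n - 1 - z := by omega
    have eA : a + r = z + (a + r - z) := by omega
    obtain ⟨u, hu⟩ := Nat.dvd_of_mod_eq_zero hmod
    calc ellv hk0 hn0 e π (a + r)
        = ellv hk0 hn0 e π (z + (a + r - z)) := by rw [← eA]
      _ = q[(a + r - z) % b']'(by rw [← hb_def]; exact Nat.mod_lt _ (by omega)) :=
          hellq _ h1
      _ = q[r % b']'(by rw [← hb_def]; exact Nat.mod_lt _ (by omega)) := by
          apply getElem_congr_idx' q
          rw [show a + r - z = b' * u + r by omega, Nat.mul_add_mod]
      _ = ellv hk0 hn0 e π (z + r) := (hellq _ h2).symm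
  obtain ⟨η, hη_def⟩ : ∃ c : ℕ, c = cntNeg hk0 hn0 e σ π z b' := ⟨_, rfl⟩
  have hcnt : ∀ a, z ≤ a → (a - z) % b' = 0 → a + b' ≤ n - 1 →
      cntNeg hk0 hn0 e σ π a b' = η := by
    intro a hza hmod hab
    rw [hη_def, cntNeg, cntNeg]
    apply congrArg List.length
    apply List.filter_congr
    intro r hr
    simp only [List.mem_range] at hr
    rw [hshift a r hza hmod hab hr]
  have hq_eq : q = (List.range b').map (fun r => ellv hk0 hn0 e π (z + r)) := by
    apply List.ext_getElem
    · simp only [List.length_map, List.length_range]; omega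
    · intro i h1 h2
      simp only [List.getElem_map, List.getElem_range]
      have hib' : i < b' := by omega
      have hiL : i < n - 1 - z := by omega
      rw [hellq i hiL]
      exact getElem_congr_idx' q (Nat.mod_eq_of_lt hib').symm h1
  have hqc : negCountL σ q = η := by
    rw [negCountL, hq_eq, List.filter_map, List.length_map, hη_def, cntNeg]
    apply congrArg List.length
    apply List.filter_congr
    intro r _
    rfl
  clear hη_def
  have Fstep : ∀ a c, z ≤ a → z ≤ c → (a - z) % b' = 0 → (c - z) % b' = 0 →
      a + b' ≤ n - 1 → c + b' ≤ n - 1 → Vv hn0 π a < Vv hn0 π c →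
      (Even η → Vv hn0 π (a + b') < Vv hn0 π (c + b')) ∧
      (¬ Even η → Vv hn0 π (c + b') < Vv hn0 π (a + b')) := by
    intro a c hza hzc hma hmc hab hcb hlt
    have hl : ∀ r, r < b' → ellv hk0 hn0 e π (a + r) = ellv hk0 hn0 e π (c + r) :=
      fun r hr => (hshift a r hza hma hab hr).trans (hshift c r hzc hmc hcb hr).symm
    have h := propL hk0 hn0 he b' a c hab hcb hl hlt
    rwa [hcnt a hza hma hab] at h
  obtain ⟨Pv, hPv⟩ : ∃ f : ℕ → ℕ, ∀ j, f j = Vv hn0 π (n - 1 - j * b') :=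
    ⟨_, fun _ => rfl⟩
  have Pstep : ∀ i j, i + 1 ≤ m → j + 1 ≤ m → Pv (i + 1) < Pv (j + 1) →
      (Even η → Pv i < Pv j) ∧ (¬ Even η → Pv j < Pv i) := by
    intro i j hi hj hlt
    simp only [hPv] at hlt ⊢
    have hib : (i + 1) * b' ≤ m * b' := Nat.mul_le_mul_right _ hi
    have hjb : (j + 1) * b' ≤ m * b' := Nat.mul_le_mul_right _ hj
    have hi1 : (i + 1) * b' = i * b' + b' := by ring
    have hj1 : (j + 1) * b' = j * b' + b' := by ring
    have hmodi : (n - 1 - (i + 1) * b' - z) % b' = 0 := by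
      have e3 : n - 1 - (i + 1) * b' - z = (m - (i + 1)) * b' := by
        rw [Nat.sub_mul]; omega
      rw [e3]; exact Nat.mul_mod_left _ _
    have hmodj : (n - 1 - (j + 1) * b' - z) % b' = 0 := by
      have e3 : n - 1 - (j + 1) * b' - z = (m - (j + 1)) * b' := by
        rw [Nat.sub_mul]; omega
      rw [e3]; exact Nat.mul_mod_left _ _
    have h := Fstep (n - 1 - (i + 1) * b') (n - 1 - (j + 1) * b')
      (by omega) (by omega) hmodi hmodj (by omega) (by omega) hlt
    have ea : n - 1 - (i + 1) * b' + b' = n - 1 - i * b' := by omega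
    have ec : n - 1 - (j + 1) * b' + b' = n - 1 - j * b' := by omega
    rw [ea, ec] at h
    exact h
  have Pdist : ∀ i j, i ≤ m → j ≤ m → i ≠ j → Pv i ≠ Pv j := by
    intro i j hi hj hij hEq
    simp only [hPv] at hEq
    have hib : i * b' ≤ m * b' := Nat.mul_le_mul_right _ hi
    have hjb : j * b' ≤ m * b' := Nat.mul_le_mul_right _ hj
    have h := Vv_inj hn0 π (show n - 1 - i * b' < n by omega)
      (show n - 1 - j * b' < n by omega) hEq
    have h2 : i * b' = j * b' := by omega
    exact hij (Nat.eq_of_mul_eq_mul_right (by omega) h2)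
  have hPm : Pv m = (π z0 : ℕ) := by
    have e1 : n - 1 - m * b' = z := by omega
    rw [hPv, e1, Vv_eq hn0 π hz]
    exact congrArg (fun x => ((π x : Fin n) : ℕ)) (Fin.ext hz_def)
  have hP0 : Pv 0 = Pn := by
    rw [hPv, show (0 : ℕ) * b' = 0 from Nat.zero_mul b', Nat.sub_zero, hPn]
    exact Vv_eq hn0 π (by omega)
  have hadj' : Pv m = Pv 0 + 1 ∨ Pv m + 1 = Pv 0 := by
    rw [hPm, hP0]; exact hadj
  -- parity of η must be odd
  have hOdd : ¬ Even η := by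
    intro hE
    rcases (Pdist 1 0 (by omega) (by omega) (by omega)).lt_or_gt with h1 | h1
    · have EU : ∀ j, j + 1 ≤ m → Pv (j + 1) < Pv j := by
        intro j
        induction j with
        | zero => intro _; exact h1
        | succ j ih =>
          intro hj
          by_contra hcon
          have hor := (Pdist (j + 1 + 1) (j + 1) hj (by omega) (by omega)).lt_or_gt
          have hlt : Pv (j + 1) < Pv (j + 1 + 1) := hor.resolve_left hcon
          have hdn := (Pstep j (j + 1) (by omega) (by omega) hlt).1 hE
          have hup := ih (by omega)
          omega
      have chain : ∀ j, 1 ≤ j → j ≤ m → Pv j ≤ Pv 1 := by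
        intro j
        induction j with
        | zero => omega
        | succ j ih =>
          intro h1j hjm
          rcases Nat.eq_zero_or_pos j with hj0 | hj0
          · subst hj0; exact le_rfl
          · have h4 := EU j hjm
            have h5 := ih (by omega) (by omega)
            omega
      have h2 : Pv m < Pv (m - 1) := by
        have h4 := EU (m - 1) (by omega)
        rwa [show m - 1 + 1 = m by omega] at h4
      have h3 : Pv (m - 1) ≤ Pv 1 := chain (m - 1) (by omega) (by omega)
      omega
    · have EU : ∀ j, j + 1 ≤ m → Pv j < Pv (j + 1) := by
        intro j
        induction j with
        | zero => intro _; exact h1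
        | succ j ih =>
          intro hj
          by_contra hcon
          have hor := (Pdist (j + 1 + 1) (j + 1) hj (by omega) (by omega)).lt_or_gt
          have hlt : Pv (j + 1 + 1) < Pv (j + 1) := hor.resolve_right hcon
          have hdn := (Pstep (j + 1) j (by omega) (by omega) hlt).1 hE
          have hup := ih (by omega)
          omega
      have chain : ∀ j, 1 ≤ j → j ≤ m → Pv 1 ≤ Pv j := by
        intro j
        induction j with
        | zero => omega
        | succ j ih =>
          intro h1j hjm
          rcases Nat.eq_zero_or_pos j with hj0 | hj0
          · subst hj0; exact le_rfl
          · have h4 := EU j hjm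
            have h5 := ih (by omega) (by omega)
            omega
      have h2 : Pv (m - 1) < Pv m := by
        have h4 := EU (m - 1) (by omega)
        rwa [show m - 1 + 1 = m by omega] at h4
      have h3 : Pv 1 ≤ Pv (m - 1) := chain (m - 1) (by omega) (by omega)
      omega
  rcases (show m = 2 ∨ 3 ≤ m by omega) with hm2' | hm3
  · -- m = 2 : p = q ++ q with n(q) odd
    subst hm2'
    refine Or.inr ⟨q, ?_, hqprim, ?_⟩
    · rw [hpq]
      simp [List.replicate]
    · rw [hqc]
      exact Nat.not_even_iff_odd.mp hOdd
  · -- 3 ≤ m : contradiction with condition (†)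
    exfalso
    have key : (Pv 1 < Pv 0 ∧ Pv 0 < Pv 2) ∨ (Pv 2 < Pv 0 ∧ Pv 0 < Pv 1) := by
      rcases (Pdist 1 0 (by omega) (by omega) (by omega)).lt_or_gt with hA | hB
      · left
        refine ⟨hA, ?_⟩
        by_contra hcon
        have hQ0 : Pv 2 < Pv 0 :=
          ((Pdist 2 0 (by omega) (by omega) (by omega)).lt_or_gt).resolve_right hcon
        have U : ∀ u, 2 * u + 2 ≤ m → Pv (2 * u + 2) < Pv (2 * u) := by
          intro u
          induction u with
          | zero =>
            intro _
            rw [show 2 * 0 + 2 = 2 by norm_num, show 2 * 0 = 0 by norm_num]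
            exact hQ0
          | succ u ih =>
            intro hu
            have ih' := ih (by omega)
            by_contra hcon2
            have hor := (Pdist (2 * (u + 1) + 2) (2 * (u + 1)) (by omega) (by omega)
              (by omega)).lt_or_gt
            have hlt2 : Pv (2 * (u + 1)) < Pv (2 * (u + 1) + 2) := hor.resolve_left hcon2
            have hlt2' : Pv (2 * u + 1 + 1) < Pv (2 * u + 3 + 1) := by
              rw [show 2 * u + 1 + 1 = 2 * (u + 1) by ring,
                show 2 * u + 3 + 1 = 2 * (u + 1) + 2 by ring]
              exact hlt2
            have s1 := (Pstep (2 * u + 1) (2 * u + 3) (by omega) (by omega) hlt2').2 hOdd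
            have s1' : Pv (2 * u + 2 + 1) < Pv (2 * u + 1) := by
              rw [show 2 * u + 2 + 1 = 2 * u + 3 by ring]
              exact s1
            have s2 := (Pstep (2 * u + 2) (2 * u) (by omega) (by omega) s1').2 hOdd
            omega
        have chainLe : ∀ u, 2 * u + 2 ≤ m → Pv (2 * u + 2) ≤ Pv 2 := by
          intro u
          induction u with
          | zero => intro _; rw [show 2 * 0 + 2 = 2 by norm_num]
          | succ u ih =>
            intro hu
            have h5 := U (u + 1) hu
            rw [show 2 * (u + 1) = 2 * u + 2 by ring] at h5
            have h6 := ih (by omega)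
            rw [show 2 * (u + 1) + 2 = 2 * u + 2 + 2 by ring]
            omega
        rcases Nat.even_or_odd m with hme | hmo
        · obtain ⟨u, hu⟩ : ∃ u, m = 2 * u + 2 := by
            rcases hme with ⟨t, ht⟩; exact ⟨t - 1, by omega⟩
          have h5 : Pv m ≤ Pv 2 := by rw [hu]; exact chainLe u (by omega)
          have h6 : Pv m ≠ Pv 2 := Pdist m 2 le_rfl (by omega) (by omega)
          omega
        · obtain ⟨u, hu⟩ : ∃ u, m - 1 = 2 * u + 2 := by
            rcases hmo with ⟨t, ht⟩; exact ⟨t - 1, by omega⟩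
          have h5 : Pv (m - 1) ≤ Pv 2 := by rw [hu]; exact chainLe u (by omega)
          have RU : ∀ j, j + 1 ≤ m →
              (Even j → Pv (j + 1) < Pv j) ∧ (¬ Even j → Pv j < Pv (j + 1)) := by
            intro j
            induction j with
            | zero =>
              intro _
              exact ⟨fun _ => hA, fun h => absurd Even.zero h⟩
            | succ j ih =>
              intro hj
              obtain ⟨ihe, iho⟩ := ih (by omega)
              constructor
              · intro hEj1
                have hOj : ¬ Even j := Nat.even_add_one.mp hEj1
                have hh := iho hOj
                by_contra hcon2
                have hor := (Pdist (j + 1 + 1) (j + 1) hj (by omega) (by omega)).lt_or_gt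
                have hlt2 : Pv (j + 1) < Pv (j + 1 + 1) := hor.resolve_left hcon2
                have hdn := (Pstep j (j + 1) (by omega) (by omega) hlt2).2 hOdd
                omega
              · intro hOj1
                have hEj : Even j := by
                  rcases Nat.even_or_odd j with h | h
                  · exact h
                  · exact absurd (Nat.even_add_one.mpr (Nat.not_even_iff_odd.mpr h)) hOj1
                have hh := ihe hEj
                by_contra hcon2
                have hor := (Pdist (j + 1 + 1) (j + 1) hj (by omega) (by omega)).lt_or_gt
                have hlt2 : Pv (j + 1 + 1) < Pv (j + 1) := hor.resolve_right hcon2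
                have hdn := (Pstep (j + 1) j (by omega) (by omega) hlt2).2 hOdd
                omega
          have hEm1 : Even (m - 1) := by
            rcases hmo with ⟨t, ht⟩; exact ⟨t, by omega⟩
          have h7 : Pv m < Pv (m - 1) := by
            have h8 := (RU (m - 1) (by omega)).1 hEm1
            rwa [show m - 1 + 1 = m by omega] at h8
          omega
      · right
        refine ⟨?_, hB⟩
        by_contra hcon
        have hQ0 : Pv 0 < Pv 2 :=
          ((Pdist 2 0 (by omega) (by omega) (by omega)).lt_or_gt).resolve_left hcon
        have U : ∀ u, 2 * u + 2 ≤ m → Pv (2 * u) < Pv (2 * u + 2) := by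
          intro u
          induction u with
          | zero =>
            intro _
            rw [show 2 * 0 + 2 = 2 by norm_num, show 2 * 0 = 0 by norm_num]
            exact hQ0
          | succ u ih =>
            intro hu
            have ih' := ih (by omega)
            by_contra hcon2
            have hor := (Pdist (2 * (u + 1) + 2) (2 * (u + 1)) (by omega) (by omega)
              (by omega)).lt_or_gt
            have hlt2 : Pv (2 * (u + 1) + 2) < Pv (2 * (u + 1)) := hor.resolve_right hcon2
            have hlt2' : Pv (2 * u + 3 + 1) < Pv (2 * u + 1 + 1) := by
              rw [show 2 * u + 3 + 1 = 2 * (u + 1) + 2 by ring,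
                show 2 * u + 1 + 1 = 2 * (u + 1) by ring]
              exact hlt2
            have s1 := (Pstep (2 * u + 3) (2 * u + 1) (by omega) (by omega) hlt2').2 hOdd
            have s1' : Pv (2 * u + 1) < Pv (2 * u + 2 + 1) := by
              rw [show 2 * u + 2 + 1 = 2 * u + 3 by ring]
              exact s1
            have s2 := (Pstep (2 * u) (2 * u + 2) (by omega) (by omega) s1').2 hOdd
            omega
        have chainGe : ∀ u, 2 * u + 2 ≤ m → Pv 2 ≤ Pv (2 * u + 2) := by
          intro u
          induction u with
          | zero => intro _; rw [show 2 * 0 + 2 = 2 by norm_num]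
          | succ u ih =>
            intro hu
            have h5 := U (u + 1) hu
            rw [show 2 * (u + 1) = 2 * u + 2 by ring] at h5
            have h6 := ih (by omega)
            rw [show 2 * (u + 1) + 2 = 2 * u + 2 + 2 by ring]
            omega
        rcases Nat.even_or_odd m with hme | hmo
        · obtain ⟨u, hu⟩ : ∃ u, m = 2 * u + 2 := by
            rcases hme with ⟨t, ht⟩; exact ⟨t - 1, by omega⟩
          have h5 : Pv 2 ≤ Pv m := by rw [hu]; exact chainGe u (by omega)
          have h6 : Pv m ≠ Pv 2 := Pdist m 2 le_rfl (by omega) (by omega)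
          omega
        · obtain ⟨u, hu⟩ : ∃ u, m - 1 = 2 * u + 2 := by
            rcases hmo with ⟨t, ht⟩; exact ⟨t - 1, by omega⟩
          have h5 : Pv 2 ≤ Pv (m - 1) := by rw [hu]; exact chainGe u (by omega)
          have RU : ∀ j, j + 1 ≤ m →
              (Even j → Pv j < Pv (j + 1)) ∧ (¬ Even j → Pv (j + 1) < Pv j) := by
            intro j
            induction j with
            | zero =>
              intro _
              exact ⟨fun _ => hB, fun h => absurd Even.zero h⟩
            | succ j ih =>
              intro hj
              obtain ⟨ihe, iho⟩ := ih (by omega)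
              constructor
              · intro hEj1
                have hOj : ¬ Even j := Nat.even_add_one.mp hEj1
                have hh := iho hOj
                by_contra hcon2
                have hor := (Pdist (j + 1 + 1) (j + 1) hj (by omega) (by omega)).lt_or_gt
                have hlt2 : Pv (j + 1 + 1) < Pv (j + 1) := hor.resolve_right hcon2
                have hdn := (Pstep (j + 1) j (by omega) (by omega) hlt2).2 hOdd
                omega
              · intro hOj1
                have hEj : Even j := by
                  rcases Nat.even_or_odd j with h | h
                  · exact h
                  · exact absurd (Nat.even_add_one.mpr (Nat.not_even_iff_odd.mpr h)) hOj1
                have hh := ihe hEj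
                by_contra hcon2
                have hor := (Pdist (j + 1 + 1) (j + 1) hj (by omega) (by omega)).lt_or_gt
                have hlt2 : Pv (j + 1) < Pv (j + 1 + 1) := hor.resolve_left hcon2
                have hdn := (Pstep j (j + 1) (by omega) (by omega) hlt2).2 hOdd
                omega
          have hEm1 : Even (m - 1) := by
            rcases hmo with ⟨t, ht⟩; exact ⟨t, by omega⟩
          have h7 : Pv (m - 1) < Pv m := by
            have h8 := (RU (m - 1) (by omega)).1 hEm1
            rwa [show m - 1 + 1 = m by omega] at h8
          omega
    -- build the forbidden configuration for b = b'
    apply hD b'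
    have h2bn : 2 * b' < n := by omega
    have hsub : ∀ x : ℕ, n - 1 - x < n :=
      fun x => lt_of_le_of_lt (Nat.sub_le _ _) (Nat.sub_lt hn0 one_pos)
    have hv0 : (π ⟨n - 1, Nat.sub_lt hn0 one_pos⟩ : ℕ) = Pv 0 := by rw [hP0, hPn]
    have hv1 : (π ⟨n - 1 - b', hsub b'⟩ : ℕ) = Pv 1 := by
      rw [hPv 1, show 1 * b' = b' from one_mul b']
      exact (Vv_eq hn0 π (hsub b')).symm
    have hv2 : (π ⟨n - 1 - 2 * b', hsub (2 * b')⟩ : ℕ) = Pv 2 := by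
      rw [hPv 2]
      exact (Vv_eq hn0 π (hsub (2 * b'))).symm
    refine ⟨hb1, h2bn, ?_, ?_⟩
    · rcases key with ⟨k1, k2⟩ | ⟨k1, k2⟩
      · exact Or.inr ⟨by rw [hv1, hv0]; exact k1, by rw [hv0, hv2]; exact k2⟩
      · exact Or.inl ⟨by rw [hv2, hv0]; exact k1, by rw [hv0, hv1]; exact k2⟩
    · intro i hi1 hib t ht
      have hL : segLetter hk0 e
            ((π ⟨n - 1 - b' - i, lt_of_le_of_lt (Nat.sub_le _ _) (hsub b')⟩ : Fin n) : ℕ)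
          = segLetter hk0 e ((π ⟨n - 1 - i, hsub i⟩ : Fin n) : ℕ) := by
        rw [← Vv_eq hn0 π (lt_of_le_of_lt (Nat.sub_le _ _) (hsub b')),
          ← Vv_eq hn0 π (hsub i)]
        have h9 := hper (n - 1 - b' - i) (by omega) (by omega)
        rw [show n - 1 - b' - i + b' = n - 1 - i by omega] at h9
        exact h9.symm
      exact block_iff hk0 he.1 he.2.1 he.2.2.1 (π _).isLt (π _).isLt hL t

end Aux5
theorem p_primitive_or_square (k n : ℕ) (hk : 2 ≤ k) (hn : 1 ≤ n)
    (σ : Fin k → Bool) (π : Equiv.Perm (Fin n))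
    (hlo : 0 < (π ⟨n - 1, by omega⟩ : ℕ)) (hhi : (π ⟨n - 1, by omega⟩ : ℕ) < n - 1)
    (e : ℕ → ℕ) (he : IsStarSeg σ π e) (hD : ∀ b : ℕ, ¬ DaggerBad k π e b)
    (x0 y0 : Fin n)
    (hx : (π x0 : ℕ) = (π ⟨n - 1, by omega⟩ : ℕ) + 1)
    (hy : (π y0 : ℕ) + 1 = (π ⟨n - 1, by omega⟩ : ℕ)) :
    (PrimitiveW (((monoWord (by omega : 0 < k) e π).take (n - 1)).drop (x0 : ℕ)) ∨
      ∃ q : List (Fin k), ((monoWord (by omega : 0 < k) e π).take (n - 1)).drop (x0 : ℕ) = q ++ q ∧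
        PrimitiveW q ∧ Odd (negCountL σ q)) ∧
    (PrimitiveW (((monoWord (by omega : 0 < k) e π).take (n - 1)).drop (y0 : ℕ)) ∨
      ∃ q : List (Fin k), ((monoWord (by omega : 0 < k) e π).take (n - 1)).drop (y0 : ℕ) = q ++ q ∧
        PrimitiveW q ∧ Odd (negCountL σ q)) := by
  exact ⟨main_one hk hn σ π hlo hhi e he hD x0 (Or.inl hx),
    main_one hk hn σ π hlo hhi e he hD y0 (Or.inr hy)⟩
end Aux4
end
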